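/- arXiv:1202.0888 — 8 statements merged into one kernel-verified Lean document; each statement's English description precedes it below -/
import Mathlib

section
/- The map F, which takes a non-crossing partition π of {1,...,m} in which every singleton block is nested inside some two-element block, and merges every two-element block with all of its direct inner singleton blocks, is a bijection from NC_{1<2}(m) onto the set of non-crossing partitions of {1,...,m} all of whose blocks have size at least two. -/
namespace JM

/-- A collection of sets is a partition of `Fin m`. -/
def IsPartitionOn {m : ℕ} (π : Set (Set (Fin m))) : Prop :=
  (∀ B ∈ π, B.Nonempty) ∧ (∀ x : Fin m, ∃ B ∈ π, x ∈ B) ∧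
  (∀ B ∈ π, ∀ B' ∈ π, (B ∩ B').Nonempty → B = B')

/-- The partition is non-crossing. -/
def Noncrossing {m : ℕ} (π : Set (Set (Fin m))) : Prop :=
  ∀ B ∈ π, ∀ B' ∈ π, B ≠ B' →
    ¬ ∃ k1 l1 k2 l2 : Fin m, k1 < l1 ∧ l1 < k2 ∧ k2 < l2 ∧
      k1 ∈ B ∧ k2 ∈ B ∧ l1 ∈ B' ∧ l2 ∈ B'

/-- `B` is an inner block of `B'`. -/
def Inner {m : ℕ} (B B' : Set (Fin m)) : Prop :=
  (∃ p ∈ B', ∀ b ∈ B, p < b) ∧ (∃ q ∈ B', ∀ b ∈ B, b < q)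

/-- `B` is a direct inner block of `B''` in π. -/
def DirectInner {m : ℕ} (π : Set (Set (Fin m))) (B B'' : Set (Fin m)) : Prop :=
  Inner B B'' ∧ ¬ ∃ B' ∈ π, Inner B B' ∧ Inner B' B''

/-- Non-crossing partitions with blocks of size 1 or 2, each singleton inner to a 2-block. -/
def NC1lt2 (m : ℕ) : Set (Set (Set (Fin m))) :=
  {π | IsPartitionOn π ∧ Noncrossing π ∧ (∀ B ∈ π, B.ncard = 1 ∨ B.ncard = 2) ∧
    ∀ B ∈ π, B.ncard = 1 → ∃ B' ∈ π, B'.ncard = 2 ∧ Inner B B'}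

/-- Non-crossing partitions all of whose blocks have size at least two. -/
def NCge2 (m : ℕ) : Set (Set (Set (Fin m))) :=
  {π | IsPartitionOn π ∧ Noncrossing π ∧ ∀ B ∈ π, 2 ≤ B.ncard}

/-- The merging map `F`: each 2-block is merged with its direct inner singletons. -/
def Fmap {m : ℕ} (π : Set (Set (Fin m))) : Set (Set (Fin m)) :=
  {C | ∃ B ∈ π, B.ncard = 2 ∧
    C = B ∪ {x | ∃ S ∈ π, S = {x} ∧ DirectInner π S B}}

/-- The splitting map `G`: from each block of size at least 3, every element except the
minimum and the maximum is placed in its own singleton block. -/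
def Gmap {m : ℕ} (π : Set (Set (Fin m))) : Set (Set (Fin m)) :=
  {C | (∃ B ∈ π, B.ncard ≤ 2 ∧ C = B) ∨
    (∃ B ∈ π, 3 ≤ B.ncard ∧ ∃ x ∈ B, (∃ y ∈ B, y < x) ∧ (∃ z ∈ B, x < z) ∧ C = {x}) ∨
    (∃ B ∈ π, 3 ≤ B.ncard ∧ ∃ y ∈ B, ∃ z ∈ B,
      (∀ b ∈ B, y ≤ b) ∧ (∀ b ∈ B, b ≤ z) ∧ C = {y, z})}

/-- Minimal number of transpositions needed to write σ as a product. -/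
noncomputable def permLength {β : Type*} [DecidableEq β] [Fintype β] (σ : Equiv.Perm β) : ℕ :=
  sInf {k | ∃ l : List (Equiv.Perm β), l.length = k ∧ (∀ t ∈ l, t.IsSwap) ∧ l.prod = σ}

/-- The element 2n+1 of {1,…,2n+1}. -/
def jmTop (n : ℕ) : Fin (2*n+1) := Fin.last (2*n)

/-- The tuple of Jucys-Murphy transpositions (αᵢ, 2n+1). -/
def jmTuple {n m : ℕ} (α : Fin m → Fin (2*n+1)) : Fin m → Equiv.Perm (Fin (2*n+1)) :=
  fun i => Equiv.swap (α i) (jmTop n)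

/-- The partition of indices grouping equal values of α. -/
def eqPartition {m : ℕ} {β : Type*} (α : Fin m → β) : Set (Set (Fin m)) :=
  {B | ∃ j : Fin m, B = {i | α i = α j}}

/-- A partition respects a two-coloring. -/
def Respects {m : ℕ} (π : Set (Set (Fin m))) (c : Fin m → Bool) : Prop :=
  ∀ B ∈ π, ∀ i ∈ B, ∀ j ∈ B, c i = c j

/-- Membership in the subgroup S_n × S_n × {e} of S_{2n+1}. -/
def InH (n : ℕ) (σ : Equiv.Perm (Fin (2*n+1))) : Prop :=
  (∀ x : Fin (2*n+1), (x:ℕ) < n → ((σ x : Fin (2*n+1)) : ℕ) < n) ∧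
  (∀ x : Fin (2*n+1), n ≤ (x:ℕ) → (x:ℕ) < 2*n →
    n ≤ ((σ x : Fin (2*n+1)) : ℕ) ∧ ((σ x : Fin (2*n+1)) : ℕ) < 2*n) ∧
  σ (jmTop n) = jmTop n

def e1 (n : ℕ) : Fin n ≃ {x : Fin (2*n+1) // (x:ℕ) < n} where
  toFun i := ⟨⟨i, by omega⟩, i.isLt⟩
  invFun x := ⟨(x.1 : ℕ), x.2⟩
  left_inv i := rfl
  right_inv x := rfl

def e2 (n : ℕ) : Fin n ≃ {x : Fin (2*n+1) // n ≤ (x:ℕ) ∧ (x:ℕ) < 2*n} where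
  toFun i := ⟨⟨n + i, by omega⟩, by simp only [Fin.val_mk]; omega⟩
  invFun x := ⟨(x.1 : ℕ) - n, by have := x.2; omega⟩
  left_inv i := by ext; simp
  right_inv x := by
    rcases x with ⟨x, hx⟩
    exact Subtype.ext (Fin.ext (by simp; omega))

/-- Embed a permutation of `Fin n` as a permutation of `Fin (2n+1)` acting on {1,…,n}. -/
def lift1 {n : ℕ} (τ : Equiv.Perm (Fin n)) : Equiv.Perm (Fin (2*n+1)) :=
  τ.extendDomain (e1 n)

/-- Embed a permutation of `Fin n` as a permutation of `Fin (2n+1)` acting on {n+1,…,2n}. -/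
def lift2 {n : ℕ} (τ : Equiv.Perm (Fin n)) : Equiv.Perm (Fin (2*n+1)) :=
  τ.extendDomain (e2 n)

section Aux
variable {m : ℕ}

lemma pair_order {B : Set (Fin m)} (h : B.ncard = 2) :
    ∃ a b : Fin m, a < b ∧ B = {a, b} := by
  rw [Set.ncard_eq_two] at h
  obtain ⟨a, b, hne, rfl⟩ := h
  rcases lt_or_gt_of_ne hne with h | h
  · exact ⟨a, b, h, rfl⟩
  · exact ⟨b, a, h, Set.pair_comm a b⟩

lemma inner_singleton_pair {a b x : Fin m} (hab : a < b) (ha : a < x) (hb : x < b) :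
    Inner ({x} : Set (Fin m)) ({a, b}) := by
  refine ⟨⟨a, by simp, ?_⟩, ⟨b, by simp, ?_⟩⟩
  · rintro y rfl; exact ha
  · rintro y rfl; exact hb

/-- shape of a block that a singleton is inner to, in an NC1lt2 partition -/
lemma block_shape {π : Set (Set (Fin m))} {B : Set (Fin m)} {x : Fin m} (hπ : π ∈ NC1lt2 m)
    (hB : B ∈ π) (hI : Inner ({x} : Set (Fin m)) B) :
    ∃ a b : Fin m, a < x ∧ x < b ∧ B = {a, b} := by
  obtain ⟨⟨p, hp, hpx⟩, ⟨q, hq, hqx⟩⟩ := hI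
  have hpx : p < x := hpx x rfl
  have hqx : x < q := hqx x rfl
  rcases hπ.2.2.1 B hB with h1 | h2
  · rw [Set.ncard_eq_one] at h1
    obtain ⟨y, rfl⟩ := h1
    simp only [Set.mem_singleton_iff] at hp hq
    subst hp; subst hq; exact absurd (hpx.trans hqx) (lt_irrefl _)
  · obtain ⟨a, b, hab, rfl⟩ := pair_order h2
    simp only [Set.mem_insert_iff, Set.mem_singleton_iff] at hp hq
    refine ⟨a, b, ?_, ?_, rfl⟩
    · rcases hp with rfl | rfl
      · exact hpx
      · exact hab.trans hpx
    · rcases hq with rfl | rfl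
      · exact hqx.trans hab
      · exact hqx

/-- two 2-blocks straddling the same point are nested -/
lemma nest {π : Set (Set (Fin m))} {a b a' b' x : Fin m} (hπ : π ∈ NC1lt2 m)
    (hB : ({a, b} : Set (Fin m)) ∈ π) (hB' : ({a', b'} : Set (Fin m)) ∈ π)
    (hne : ({a, b} : Set (Fin m)) ≠ {a', b'})
    (hax : a < x) (hxb : x < b) (hax' : a' < x) (hxb' : x < b') :
    (a < a' ∧ b' < b) ∨ (a' < a ∧ b < b') := by
  have hdisj := hπ.1.2.2 _ hB _ hB'
  have haa : a ≠ a' := by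
    rintro rfl; exact hne (hdisj ⟨a, by simp⟩)
  have hbb : b ≠ b' := by
    rintro rfl; exact hne (hdisj ⟨b, by simp⟩)
  have hNC := hπ.2.1 _ hB _ hB' hne
  rcases lt_or_gt_of_ne haa with h1 | h1
  · left
    refine ⟨h1, ?_⟩
    rcases lt_or_gt_of_ne hbb with h2 | h2
    · exact absurd ⟨a, a', b, b', h1, hax'.trans hxb, h2, by simp, by simp, by simp, by simp⟩ hNC
    · exact h2
  · right
    refine ⟨h1, ?_⟩
    rcases lt_or_gt_of_ne hbb with h2 | h2
    · exact h2
    · exact absurd ⟨a', a, b', b, h1, hax.trans hxb', h2, by simp, by simp, by simp, by simp⟩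
        (hπ.2.1 _ hB' _ hB (Ne.symm hne))

end Aux
section Aux2
variable {m : ℕ} {π : Set (Set (Fin m))}

/-- existence of a direct inner 2-block for every singleton in NC1lt2 -/
lemma exists_direct (hπ : π ∈ NC1lt2 m) {x : Fin m} (hx : ({x} : Set (Fin m)) ∈ π) :
    ∃ B ∈ π, ∃ a b : Fin m, a < x ∧ x < b ∧ B = {a, b} ∧ DirectInner π ({x} : Set (Fin m)) B := by
  classical
  obtain ⟨B', hB', _, hI⟩ := hπ.2.2.2 _ hx (by simp)
  -- the set of upper endpoints of straddling blocks
  set S : Set (Fin m) := {b : Fin m | ∃ B ∈ π, ∃ a : Fin m, a < x ∧ x < b ∧ B = {a, b}} with hS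
  obtain ⟨a', b', ha', hb', hBeq⟩ := block_shape hπ hB' hI
  have hSne : S.Nonempty := ⟨b', B', hB', a', ha', hb', hBeq⟩
  obtain ⟨b0, hb0S, hb0min⟩ := Set.exists_min_image S id (Set.toFinite S) hSne
  obtain ⟨B0, hB0, a0, ha0, hxb0, hB0eq⟩ := hb0S
  refine ⟨B0, hB0, a0, b0, ha0, hxb0, hB0eq, ?_, ?_⟩
  · rw [hB0eq]; exact inner_singleton_pair (ha0.trans hxb0) ha0 hxb0
  · rintro ⟨B1, hB1, hI1, hI10⟩
    obtain ⟨a1, b1, ha1, hb1, hB1eq⟩ := block_shape hπ hB1 hI1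
    have hb1S : b1 ∈ S := ⟨B1, hB1, a1, ha1, hb1, hB1eq⟩
    -- Inner B1 B0 forces b1 < b0
    obtain ⟨_, ⟨q, hq, hqall⟩⟩ := hI10
    have hq1 : b1 < q := hqall b1 (by rw [hB1eq]; simp)
    have : q = b0 := by
      rw [hB0eq] at hq
      rcases hq with rfl | rfl
      · exact absurd (hb1.trans (hq1.trans ha0)) (lt_irrefl x)
      · rfl
    rw [this] at hq1
    exact absurd (hb0min b1 hb1S) (by simpa using hq1.not_ge)

/-- uniqueness of the direct inner 2-block -/
lemma direct_unique (hπ : π ∈ NC1lt2 m) {x : Fin m} {B B' : Set (Fin m)}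
    (hB : B ∈ π) (hB' : B' ∈ π)
    (hd : DirectInner π ({x} : Set (Fin m)) B) (hd' : DirectInner π ({x} : Set (Fin m)) B') :
    B = B' := by
  by_contra hne
  obtain ⟨a, b, hax, hxb, hBeq⟩ := block_shape hπ hB hd.1
  obtain ⟨a', b', hax', hxb', hB'eq⟩ := block_shape hπ hB' hd'.1
  have hne' : ({a, b} : Set (Fin m)) ≠ {a', b'} := by rw [← hBeq, ← hB'eq]; exact hne
  rcases nest hπ (hBeq ▸ hB) (hB'eq ▸ hB') hne' hax hxb hax' hxb' with ⟨h1, h2⟩ | ⟨h1, h2⟩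
  · -- B' strictly inside B : Inner B' B, contradicting directness of B
    refine hd.2 ⟨B', hB', hd'.1, ?_⟩
    rw [hBeq, hB'eq]
    refine ⟨⟨a, by simp, ?_⟩, ⟨b, by simp, ?_⟩⟩
    · intro c hc; rcases hc with rfl | rfl
      · exact h1
      · exact h1.trans (hax'.trans hxb')
    · intro c hc; rcases hc with rfl | rfl
      · exact (hax'.trans hxb').trans h2
      · exact h2
  · refine hd'.2 ⟨B, hB, hd.1, ?_⟩
    rw [hBeq, hB'eq]
    refine ⟨⟨a', by simp, ?_⟩, ⟨b', by simp, ?_⟩⟩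
    · intro c hc; rcases hc with rfl | rfl
      · exact h1
      · exact h1.trans (hax.trans hxb)
    · intro c hc; rcases hc with rfl | rfl
      · exact (hax.trans hxb).trans h2
      · exact h2

/-- the merged block -/
def merged (π : Set (Set (Fin m))) (B : Set (Fin m)) : Set (Fin m) :=
  B ∪ {x | ∃ S ∈ π, S = {x} ∧ DirectInner π S B}

lemma mem_Fmap_iff {C : Set (Fin m)} :
    C ∈ Fmap π ↔ ∃ B ∈ π, B.ncard = 2 ∧ C = merged π B := Iff.rfl

lemma subset_merged {B : Set (Fin m)} : B ⊆ merged π B := Set.subset_union_left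

lemma mem_merged_elim {B : Set (Fin m)} {x : Fin m} (h : x ∈ merged π B) :
    x ∈ B ∨ (({x} : Set (Fin m)) ∈ π ∧ DirectInner π ({x} : Set (Fin m)) B) := by
  rcases h with h | h
  · exact Or.inl h
  · obtain ⟨S, hS, rfl, hd⟩ := h
    exact Or.inr ⟨hS, hd⟩

/-- bounds for the merged block -/
lemma merged_bounds (hπ : π ∈ NC1lt2 m) {a b x : Fin m} (hab : a < b)
    (hB : ({a, b} : Set (Fin m)) ∈ π) (hx : x ∈ merged π ({a, b} : Set (Fin m))) :
    a ≤ x ∧ x ≤ b := by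
  rcases mem_merged_elim hx with h | ⟨hs, hd⟩
  · rcases h with rfl | rfl
    · exact ⟨le_rfl, hab.le⟩
    · exact ⟨hab.le, le_rfl⟩
  · obtain ⟨a', b', hax, hxb, heq⟩ := block_shape hπ hB hd.1
    have ha : a' = a ∨ a' = b := by
      have : a' ∈ ({a, b} : Set (Fin m)) := by rw [heq]; simp
      simpa using this
    have hb : b' = a ∨ b' = b := by
      have : b' ∈ ({a, b} : Set (Fin m)) := by rw [heq]; simp
      simpa using this
    constructor
    · rcases ha with rfl | rfl
      · exact hax.le
      · exact (hab.trans hax).le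
    · rcases hb with rfl | rfl
      · exact (hxb.trans hab).le
      · exact hxb.le

/-- strict bounds for merged singletons -/
lemma merged_strict (hπ : π ∈ NC1lt2 m) {a b x : Fin m} (hab : a < b)
    (hB : ({a, b} : Set (Fin m)) ∈ π) (hx : x ∈ merged π ({a, b} : Set (Fin m)))
    (hxa : x ≠ a) (hxb : x ≠ b) :
    a < x ∧ x < b ∧ ({x} : Set (Fin m)) ∈ π ∧ DirectInner π ({x} : Set (Fin m)) ({a,b}) := by
  rcases mem_merged_elim hx with h | ⟨hs, hd⟩
  · rcases h with rfl | rfl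
    · exact absurd rfl hxa
    · exact absurd rfl hxb
  · obtain ⟨h1, h2⟩ := merged_bounds hπ hab hB hx
    exact ⟨lt_of_le_of_ne h1 (Ne.symm hxa), lt_of_le_of_ne h2 hxb, hs, hd⟩

end Aux2
section Aux3
variable {m : ℕ} {π : Set (Set (Fin m))}

lemma F_mapsTo (hπ : π ∈ NC1lt2 m) : Fmap π ∈ NCge2 m := by
  obtain ⟨⟨hne0, hcov, hdisj⟩, hNC, hsz, hsing⟩ := id hπ
  refine ⟨⟨?_, ?_, ?_⟩, ?_, ?_⟩
  · rintro C ⟨B, hB, hn, rfl⟩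
    exact (hne0 B hB).mono subset_merged
  · intro x
    obtain ⟨D, hD, hxD⟩ := hcov x
    rcases hsz D hD with h1 | h2
    · rw [Set.ncard_eq_one] at h1
      obtain ⟨y, rfl⟩ := h1
      rcases hxD with rfl
      obtain ⟨B, hB, a, b, hax, hxb, hBeq, hd⟩ := exists_direct hπ hD
      refine ⟨merged π B, ⟨B, hB, ?_, rfl⟩, Or.inr ⟨{x}, hD, rfl, hd⟩⟩
      rw [hBeq]; exact Set.ncard_pair (hax.trans hxb).ne
    · exact ⟨merged π D, ⟨D, hD, h2, rfl⟩, subset_merged hxD⟩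
  · rintro C ⟨B, hB, hn, rfl⟩ C' ⟨B', hB', hn', rfl⟩ ⟨x, hx, hx'⟩
    suffices h : B = B' by rw [h]
    rcases mem_merged_elim hx with h1 | ⟨hs1, hd1⟩ <;>
      rcases mem_merged_elim hx' with h2 | ⟨hs2, hd2⟩
    · exact hdisj _ hB _ hB' ⟨x, h1, h2⟩
    · exact absurd (hdisj _ hB _ hs2 ⟨x, h1, rfl⟩ ▸ hn) (by simp)
    · exact absurd (hdisj _ hB' _ hs1 ⟨x, h2, rfl⟩ ▸ hn') (by simp)
    · exact direct_unique hπ hB hB' hd1 hd2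
  · rintro C ⟨B, hB, hn, rfl⟩ C' ⟨B', hB', hn', rfl⟩ hCne
    rintro ⟨k1, l1, k2, l2, h12, h23, h34, hk1, hk2, hl1, hl2⟩
    have hBne : B ≠ B' := fun h => hCne (by rw [h])
    obtain ⟨a, b, hab, rfl⟩ := pair_order hn
    obtain ⟨a', b', hab', rfl⟩ := pair_order hn'
    obtain ⟨hak1, hk1b⟩ := merged_bounds hπ hab hB hk1
    obtain ⟨hak2, hk2b⟩ := merged_bounds hπ hab hB hk2
    obtain ⟨hal1, hl1b⟩ := merged_bounds hπ hab' hB' hl1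
    obtain ⟨hal2, hl2b⟩ := merged_bounds hπ hab' hB' hl2
    rcases lt_trichotomy a a' with h1 | h1 | h1
    · rcases lt_trichotomy b b' with h2 | h2 | h2
      · exact hNC _ hB _ hB' hBne ⟨a, a', b, b', h1,
          lt_of_le_of_lt hal1 (lt_of_lt_of_le h23 hk2b), h2,
          by simp, by simp, by simp, by simp⟩
      · exact hBne (hdisj _ hB _ hB' ⟨b, by simp, by simp [h2]⟩)
      · -- b' < b : k2 is a direct-inner singleton of B, but B' is between
        have hk2a : k2 ≠ a := (lt_of_le_of_lt hak1 (h12.trans h23)).ne'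
        have hk2b' : k2 ≠ b := ((lt_of_lt_of_le h34 hl2b).trans h2).ne
        obtain ⟨_, _, _, hd⟩ := merged_strict hπ hab hB hk2 hk2a hk2b'
        refine hd.2 ⟨{a', b'}, hB', ?_, ?_⟩
        · exact inner_singleton_pair hab' (lt_of_le_of_lt hal1 h23) (lt_of_lt_of_le h34 hl2b)
        · refine ⟨⟨a, by simp, ?_⟩, ⟨b, by simp, ?_⟩⟩
          · rintro c (rfl | rfl)
            · exact h1
            · exact h1.trans hab'
          · rintro c (rfl | rfl)
            · exact hab'.trans h2
            · exact h2
    · exact hBne (hdisj _ hB _ hB' ⟨a, by simp, by simp [h1]⟩)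
    · rcases lt_trichotomy b b' with h2 | h2 | h2
      · -- a' < a, b < b' : l1 is a direct-inner singleton of B', but B is between
        have hl1a : l1 ≠ a' := ((h1.trans_le hak1).trans h12).ne'
        have hl1b' : l1 ≠ b' := ((h23.trans_le hk2b).trans h2).ne
        obtain ⟨_, _, _, hd⟩ := merged_strict hπ hab' hB' hl1 hl1a hl1b'
        refine hd.2 ⟨{a, b}, hB, ?_, ?_⟩
        · exact inner_singleton_pair hab (lt_of_le_of_lt hak1 h12) (lt_of_lt_of_le h23 hk2b)
        · refine ⟨⟨a', by simp, ?_⟩, ⟨b', by simp, ?_⟩⟩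
          · rintro c (rfl | rfl)
            · exact h1
            · exact h1.trans hab
          · rintro c (rfl | rfl)
            · exact hab.trans h2
            · exact h2
      · exact hBne (hdisj _ hB _ hB' ⟨b, by simp, by simp [h2]⟩)
      · exact hNC _ hB' _ hB hBne.symm ⟨a', a, b', b, h1,
          lt_of_le_of_lt hak1 (h12.trans_le hl1b), h2,
          by simp, by simp, by simp, by simp⟩
  · rintro C ⟨B, hB, hn, rfl⟩
    calc 2 = B.ncard := hn.symm
    _ ≤ (merged π B).ncard := Set.ncard_le_ncard subset_merged (Set.toFinite _)

end Aux3
section Aux4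
variable {m : ℕ} {π : Set (Set (Fin m))}

lemma three_le_ncard {s : Set (Fin m)} {a x b : Fin m} (ha : a ∈ s) (hx : x ∈ s)
    (hb : b ∈ s) (h1 : a < x) (h2 : x < b) : 3 ≤ s.ncard := by
  have hsub : ({a, x, b} : Set (Fin m)) ⊆ s := by
    intro c hc; rcases hc with rfl | rfl | rfl <;> assumption
  have h3 : ({a, x, b} : Set (Fin m)).ncard = 3 := by
    rw [Set.ncard_insert_of_notMem (by simp [h1.ne, (h1.trans h2).ne]),
      Set.ncard_pair h2.ne]
  calc 3 = ({a, x, b} : Set (Fin m)).ncard := h3.symm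
  _ ≤ s.ncard := Set.ncard_le_ncard hsub (Set.toFinite s)

lemma GF (hπ : π ∈ NC1lt2 m) : Gmap (Fmap π) = π := by
  ext C
  constructor
  · rintro (⟨D, hD, hle, rfl⟩ |
      ⟨D, hD, h3, x, hxD, ⟨y, hy, hyx⟩, ⟨z, hz, hxz⟩, rfl⟩ |
      ⟨D, hD, h3, y, hyD, z, hzD, hymin, hzmax, rfl⟩)
    · obtain ⟨B, hB, hn, rfl⟩ := hD
      exact Set.mem_of_eq_of_mem
        (Set.eq_of_subset_of_ncard_le subset_merged (hle.trans hn.ge) (Set.toFinite _)).symm hB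
    · obtain ⟨B, hB, hn, rfl⟩ := hD
      obtain ⟨a, b, hab, rfl⟩ := pair_order hn
      have hxa : x ≠ a := by
        rintro rfl
        exact absurd (merged_bounds hπ hab hB hy).1 (not_le.mpr hyx)
      have hxb : x ≠ b := by
        rintro rfl
        exact absurd (merged_bounds hπ hab hB hz).2 (not_le.mpr hxz)
      exact (merged_strict hπ hab hB hxD hxa hxb).2.2.1
    · obtain ⟨B, hB, hn, rfl⟩ := hD
      obtain ⟨a, b, hab, rfl⟩ := pair_order hn
      have hya : y = a := le_antisymm
        (hymin a (subset_merged (by simp))) (merged_bounds hπ hab hB hyD).1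
      have hzb : z = b := le_antisymm
        (merged_bounds hπ hab hB hzD).2 (hzmax b (subset_merged (by simp)))
      rw [hya, hzb]; exact hB
  · intro hC
    rcases hπ.2.2.1 C hC with h1 | h2
    · rw [Set.ncard_eq_one] at h1
      obtain ⟨x, rfl⟩ := h1
      obtain ⟨B, hB, a, b, hax, hxb, hBeq, hd⟩ := exists_direct hπ hC
      subst hBeq
      have hn2 : ({a, b} : Set (Fin m)).ncard = 2 := Set.ncard_pair (hax.trans hxb).ne
      have hxm : x ∈ merged π {a, b} := Or.inr ⟨{x}, hC, rfl, hd⟩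
      have ham : a ∈ merged π {a, b} := subset_merged (by simp)
      have hbm : b ∈ merged π {a, b} := subset_merged (by simp)
      exact Or.inr (Or.inl ⟨merged π {a, b}, ⟨{a, b}, hB, hn2, rfl⟩,
        three_le_ncard ham hxm hbm hax hxb, x, hxm, ⟨a, ham, hax⟩, ⟨b, hbm, hxb⟩, rfl⟩)
    · obtain ⟨a, b, hab, rfl⟩ := pair_order h2
      by_cases hM : merged π ({a, b} : Set (Fin m)) = {a, b}
      · exact Or.inl ⟨merged π {a, b}, ⟨{a, b}, hC, h2, rfl⟩, by rw [hM]; exact h2.le, hM.symm⟩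
      · obtain ⟨x, hxm, hxnot⟩ := Set.exists_of_ssubset
          (ssubset_of_subset_of_ne subset_merged (Ne.symm hM))
        simp only [Set.mem_insert_iff, Set.mem_singleton_iff, not_or] at hxnot
        obtain ⟨hax, hxb, _, _⟩ := merged_strict hπ hab hC hxm hxnot.1 hxnot.2
        have ham : a ∈ merged π {a, b} := subset_merged (by simp)
        have hbm : b ∈ merged π {a, b} := subset_merged (by simp)
        exact Or.inr (Or.inr ⟨merged π {a, b}, ⟨{a, b}, hC, h2, rfl⟩,
          three_le_ncard ham hxm hbm hax hxb, a, ham, b, hbm,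
          fun c hc => (merged_bounds hπ hab hC hc).1,
          fun c hc => (merged_bounds hπ hab hC hc).2, rfl⟩)

end Aux4
section Aux5
variable {m : ℕ} {π' : Set (Set (Fin m))}

lemma exists_minmax {B : Set (Fin m)} (hne : B.Nonempty) (h2 : 2 ≤ B.ncard) :
    ∃ u v : Fin m, u ∈ B ∧ v ∈ B ∧ (∀ c ∈ B, u ≤ c) ∧ (∀ c ∈ B, c ≤ v) ∧ u < v := by
  obtain ⟨u, hu, humin⟩ := Set.exists_min_image B id (Set.toFinite B) hne
  obtain ⟨v, hv, hvmax⟩ := Set.exists_max_image B id (Set.toFinite B) hne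
  refine ⟨u, v, hu, hv, humin, hvmax, ?_⟩
  rcases eq_or_lt_of_le (humin v hv : u ≤ v) with rfl | h
  · exfalso
    have hsub : B ⊆ {u} := fun c hc => le_antisymm (hvmax c hc) (humin c hc)
    have := Set.ncard_le_ncard hsub (Set.toFinite _)
    simp only [Set.ncard_singleton] at this
    omega
  · exact h

lemma G_elim {C : Set (Fin m)} (h : C ∈ Gmap π') :
    ∃ B ∈ π', C ⊆ B ∧ ((C = B ∧ B.ncard ≤ 2) ∨
      (3 ≤ B.ncard ∧ ∃ x, C = {x} ∧ x ∈ B ∧ (∃ y ∈ B, y < x) ∧ (∃ z ∈ B, x < z)) ∨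
      (3 ≤ B.ncard ∧ ∃ y z, C = {y, z} ∧ y ∈ B ∧ z ∈ B ∧
        (∀ b ∈ B, y ≤ b) ∧ (∀ b ∈ B, b ≤ z))) := by
  rcases h with ⟨B, hB, hle, rfl⟩ |
      ⟨B, hB, h3, x, hxB, hy, hz, rfl⟩ |
      ⟨B, hB, h3, y, hyB, z, hzB, hymin, hzmax, rfl⟩
  · exact ⟨_, hB, le_rfl, Or.inl ⟨rfl, hle⟩⟩
  · exact ⟨B, hB, by simp [hxB], Or.inr (Or.inl ⟨h3, x, rfl, hxB, hy, hz⟩)⟩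
  · exact ⟨B, hB, by intro c hc; rcases hc with rfl | rfl <;> assumption,
      Or.inr (Or.inr ⟨h3, y, z, rfl, hyB, hzB, hymin, hzmax⟩)⟩

/-- min and max of a big block are distinct -/
lemma minmax_lt (hπ' : π' ∈ NCge2 m) {B : Set (Fin m)} (hB : B ∈ π') {y z : Fin m}
    (hyB : y ∈ B) (hzB : z ∈ B) (hymin : ∀ b ∈ B, y ≤ b) (hzmax : ∀ b ∈ B, b ≤ z) :
    y < z := by
  obtain ⟨u, v, hu, hv, humin, hvmax, huv⟩ :=
    exists_minmax (hπ'.1.1 B hB) (hπ'.2.2 B hB)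
  have hyu : y = u := le_antisymm (hymin u hu) (humin y hyB)
  have hzv : z = v := le_antisymm (hvmax z hzB) (hzmax v hv)
  rw [hyu, hzv]; exact huv

lemma G_mapsTo (hπ' : π' ∈ NCge2 m) : Gmap π' ∈ NC1lt2 m := by
  obtain ⟨⟨hne0, hcov, hdisj⟩, hNC, hsz⟩ := id hπ'
  refine ⟨⟨?_, ?_, ?_⟩, ?_, ?_, ?_⟩
  · -- nonempty
    intro C hC
    rcases hC with ⟨B, hB, _, rfl⟩ | ⟨B, hB, _, x, _, _, _, rfl⟩ |
      ⟨B, hB, _, y, _, z, _, _, _, rfl⟩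
    · exact hne0 _ hB
    · exact ⟨x, rfl⟩
    · exact ⟨y, by simp⟩
  · -- cover
    intro x
    obtain ⟨B, hB, hxB⟩ := hcov x
    by_cases h2 : B.ncard ≤ 2
    · exact ⟨B, Or.inl ⟨B, hB, h2, rfl⟩, hxB⟩
    · have h3 : 3 ≤ B.ncard := by omega
      obtain ⟨u, v, hu, hv, humin, hvmax, huv⟩ := exists_minmax (hne0 B hB) (hsz B hB)
      by_cases hxu : x = u
      · exact ⟨{u, v}, Or.inr (Or.inr ⟨B, hB, h3, u, hu, v, hv, humin, hvmax, rfl⟩),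
          by simp [hxu]⟩
      · by_cases hxv : x = v
        · exact ⟨{u, v}, Or.inr (Or.inr ⟨B, hB, h3, u, hu, v, hv, humin, hvmax, rfl⟩),
            by simp [hxv]⟩
        · exact ⟨{x}, Or.inr (Or.inl ⟨B, hB, h3, x, hxB,
            ⟨u, hu, lt_of_le_of_ne (humin x hxB) (Ne.symm hxu)⟩,
            ⟨v, hv, lt_of_le_of_ne (hvmax x hxB) hxv⟩, rfl⟩), rfl⟩
  · -- disjoint
    intro C hC C' hC' ⟨w, hw, hw'⟩
    obtain ⟨B, hB, hsub, hcase⟩ := G_elim hC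
    obtain ⟨B', hB', hsub', hcase'⟩ := G_elim hC'
    have hBB : B = B' := hdisj _ hB _ hB' ⟨w, hsub hw, hsub' hw'⟩
    subst hBB
    rcases hcase with ⟨rfl, hle⟩ | ⟨h3, x, rfl, hxB, ⟨y, hyB, hyx⟩, ⟨z, hzB, hxz⟩⟩ |
        ⟨h3, y, z, rfl, hyB, hzB, hymin, hzmax⟩ <;>
      rcases hcase' with ⟨rfl, hle'⟩ | ⟨h3', x', rfl, hxB', ⟨y', hyB', hyx'⟩, ⟨z', hzB', hxz'⟩⟩ |
        ⟨h3', y', z', rfl, hyB', hzB', hymin', hzmax'⟩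
    · rfl
    · omega
    · omega
    · omega
    · rcases hw with rfl; rcases hw' with rfl; rfl
    · rcases hw with rfl
      rcases hw' with rfl | rfl
      · exact absurd (hymin' y hyB) (not_le.mpr hyx)
      · exact absurd (hzmax' z hzB) (not_le.mpr hxz)
    · omega
    · rcases hw' with rfl
      rcases hw with rfl | rfl
      · exact absurd (hymin y' hyB') (not_le.mpr hyx')
      · exact absurd (hzmax z' hzB') (not_le.mpr hxz')
    · have hy : y = y' := le_antisymm (hymin y' hyB') (hymin' y hyB)
      have hz : z = z' := le_antisymm (hzmax' z hzB) (hzmax z' hzB')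
      rw [hy, hz]
  · -- noncrossing
    intro C hC C' hC' hne ⟨k1, l1, k2, l2, h12, h23, h34, hk1, hk2, hl1, hl2⟩
    obtain ⟨B, hB, hsub, hcase⟩ := G_elim hC
    obtain ⟨B', hB', hsub', hcase'⟩ := G_elim hC'
    by_cases hBB : B = B'
    · subst hBB
      have hkk : k1 ≠ k2 := (h12.trans h23).ne
      have hll : l1 ≠ l2 := (h23.trans h34).ne
      rcases hcase with ⟨rfl, hle⟩ | ⟨h3, x, rfl, -, -, -⟩ |
          ⟨h3, y, z, rfl, hyB, hzB, hymin, hzmax⟩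
      · rcases hcase' with ⟨rfl, hle'⟩ | ⟨h3', x', hC'eq, -, -, -⟩ |
          ⟨h3', y', z', hC'eq, -, -, -, -⟩
        · exact hne rfl
        · omega
        · omega
      · rcases hk1 with rfl; rcases hk2 with rfl; exact hkk rfl
      · rcases hcase' with ⟨rfl, hle'⟩ | ⟨h3', x', rfl, -, -, -⟩ |
          ⟨h3', y', z', rfl, hyB', hzB', hymin', hzmax'⟩
        · omega
        · rcases hl1 with rfl; rcases hl2 with rfl; exact hll rfl
        · have hy : y = y' := le_antisymm (hymin y' hyB') (hymin' y hyB)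
          have hz : z = z' := le_antisymm (hzmax' z hzB) (hzmax z' hzB')
          exact hne (by rw [hy, hz])
    · exact hNC _ hB _ hB' hBB ⟨k1, l1, k2, l2, h12, h23, h34,
        hsub hk1, hsub hk2, hsub' hl1, hsub' hl2⟩
  · -- sizes
    intro C hC
    obtain ⟨B, hB, hsub, hcase⟩ := G_elim hC
    rcases hcase with ⟨rfl, hle⟩ | ⟨h3, x, rfl, -, -, -⟩ |
        ⟨h3, y, z, rfl, hyB, hzB, hymin, hzmax⟩
    · exact Or.inr (le_antisymm hle (hsz _ hB))
    · exact Or.inl (Set.ncard_singleton x)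
    · exact Or.inr (Set.ncard_pair (minmax_lt hπ' hB hyB hzB hymin hzmax).ne)
  · -- singletons are inner
    intro C hC h1
    obtain ⟨B, hB, hsub, hcase⟩ := G_elim hC
    rcases hcase with ⟨rfl, hle⟩ | ⟨h3, x, rfl, hxB, ⟨y, hyB, hyx⟩, ⟨z, hzB, hxz⟩⟩ |
        ⟨h3, y, z, rfl, hyB, hzB, hymin, hzmax⟩
    · have := hsz _ hB; omega
    · obtain ⟨u, v, hu, hv, humin, hvmax, huv⟩ := exists_minmax (hne0 B hB) (hsz B hB)
      refine ⟨{u, v}, Or.inr (Or.inr ⟨B, hB, h3, u, hu, v, hv, humin, hvmax, rfl⟩),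
        Set.ncard_pair huv.ne, inner_singleton_pair huv ?_ ?_⟩
      · exact lt_of_le_of_lt (humin y hyB) hyx
      · exact lt_of_lt_of_le hxz (hvmax z hzB)
    · rw [Set.ncard_pair (minmax_lt hπ' hB hyB hzB hymin hzmax).ne] at h1; omega

end Aux5
section Aux6
variable {m : ℕ} {π' : Set (Set (Fin m))}

/-- the pair {min,max} of a big block is the direct inner parent of interior singletons -/
lemma Fwd (hπ' : π' ∈ NCge2 m) {B : Set (Fin m)} (hB : B ∈ π') (h3 : 3 ≤ B.ncard)
    {x u v : Fin m} (hxB : x ∈ B) (hu : u ∈ B) (hv : v ∈ B)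
    (humin : ∀ c ∈ B, u ≤ c) (hvmax : ∀ c ∈ B, c ≤ v) (hux : u < x) (hxv : x < v) :
    DirectInner (Gmap π') ({x} : Set (Fin m)) ({u, v}) := by
  refine ⟨inner_singleton_pair (hux.trans hxv) hux hxv, ?_⟩
  rintro ⟨C, hC, hIC, hICD⟩
  obtain ⟨⟨p, hp, hpx⟩, ⟨q, hq, hqx⟩⟩ := hIC
  have hpx : p < x := hpx x rfl
  have hqx : x < q := hqx x rfl
  obtain ⟨⟨s, hs, hsall⟩, ⟨t, ht, htall⟩⟩ := hICD
  have hsu : s = u := by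
    rcases hs with rfl | rfl
    · rfl
    · exact absurd (hpx.trans hxv) (not_lt.mpr (hsall p hp).le)
  subst hsu
  have hup : s < p := hsall p hp
  obtain ⟨B'', hB'', hsub, hcase⟩ := G_elim hC
  by_cases hBB : B'' = B
  · subst hBB
    rcases hcase with ⟨rfl, hle⟩ | ⟨-, x', rfl, -, -, -⟩ | ⟨-, y, z, rfl, hyB, -, hymin, -⟩
    · omega
    · rcases hp with rfl; rcases hq with rfl; exact absurd (hpx.trans hqx) (lt_irrefl _)
    · have h1 : s < y := hsall y (by simp)
      have h2 : y ≤ s := hymin s hu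
      exact absurd h1 (not_lt.mpr h2)
  · exact hπ'.2.1 _ hB _ hB'' (Ne.symm hBB)
      ⟨s, p, x, q, hup, hpx, hqx, hu, hxB, hsub hp, hsub hq⟩

/-- uniqueness of the direct inner parent -/
lemma Uniq (hπ' : π' ∈ NCge2 m) {B : Set (Fin m)} (hB : B ∈ π') (h3 : 3 ≤ B.ncard)
    {x u v : Fin m} (hxB : x ∈ B) (hu : u ∈ B) (hv : v ∈ B)
    (humin : ∀ c ∈ B, u ≤ c) (hvmax : ∀ c ∈ B, c ≤ v) (hux : u < x) (hxv : x < v)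
    {D : Set (Fin m)} (hD : D ∈ Gmap π')
    (hdi : DirectInner (Gmap π') ({x} : Set (Fin m)) D) :
    D = {u, v} := by
  obtain ⟨⟨p, hp, hpx⟩, ⟨q, hq, hqx⟩⟩ := hdi.1
  have hpx : p < x := hpx x rfl
  have hqx : x < q := hqx x rfl
  obtain ⟨B', hB', hsubD, hcase⟩ := G_elim hD
  by_cases hBB : B' = B
  · subst hBB
    rcases hcase with ⟨rfl, hle⟩ | ⟨-, x', rfl, -, -, -⟩ | ⟨-, y, z, rfl, hyB, hzB, hymin, hzmax⟩
    · omega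
    · rcases hp with rfl; rcases hq with rfl; exact absurd (hpx.trans hqx) (lt_irrefl _)
    · have hy : y = u := le_antisymm (hymin u hu) (humin y hyB)
      have hz : z = v := le_antisymm (hvmax z hzB) (hzmax v hv)
      rw [hy, hz]
  · exfalso
    have hdisj := hπ'.1.2.2
    have hup : u ≠ p := by
      rintro rfl
      exact hBB (hdisj _ hB' _ hB ⟨u, hsubD hp, hu⟩)
    rcases lt_or_gt_of_ne hup with h1 | h1
    · exact hπ'.2.1 _ hB _ hB' (fun h => hBB h.symm)
        ⟨u, p, x, q, h1, hpx, hqx, hu, hxB, hsubD hp, hsubD hq⟩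
    · have hvq : v ≠ q := by
        rintro rfl
        exact hBB (hdisj _ hB' _ hB ⟨v, hsubD hq, hv⟩)
      rcases lt_or_gt_of_ne hvq with h2 | h2
      · -- v < q together with p < u : {u,v} is strictly inside D, contradicting directness
        refine hdi.2 ⟨{u, v}, ?_, inner_singleton_pair (hux.trans hxv) hux hxv, ?_, ?_⟩
        · exact Or.inr (Or.inr ⟨B, hB, h3, u, hu, v, hv, humin, hvmax, rfl⟩)
        · refine ⟨p, hp, ?_⟩
          rintro c (rfl | rfl)
          · exact h1
          · exact h1.trans (hux.trans hxv)
        · refine ⟨q, hq, ?_⟩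
          rintro c (rfl | rfl)
          · exact (hux.trans hxv).trans h2
          · exact h2
      · exact hπ'.2.1 _ hB' _ hB hBB
          ⟨p, u, q, v, h1, lt_of_le_of_lt (humin x hxB) hqx, h2, hsubD hp, hsubD hq, hu, hv⟩

lemma merged_small (hπ' : π' ∈ NCge2 m) {B : Set (Fin m)} (hB : B ∈ π')
    (h2 : B.ncard = 2) (hBG : B ∈ Gmap π') :
    merged (Gmap π') B = B := by
  refine Set.Subset.antisymm ?_ subset_merged
  intro w hw
  rcases mem_merged_elim hw with h | ⟨hs, hd⟩
  · exact h
  · exfalso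
    obtain ⟨Bx, hBx, hsubx, hcase⟩ := G_elim hs
    rcases hcase with ⟨heq, hle⟩ | ⟨h3x, x', heq, hxB', ⟨y, hy, hyx⟩, ⟨z, hz, hxz⟩⟩ |
        ⟨h3x, y, z, heq, hyB, hzB, hymin, hzmax⟩
    · have h1 : Bx.ncard = 1 := by rw [← heq]; exact Set.ncard_singleton w
      have := hπ'.2.2 _ hBx; omega
    · have hxw : x' = w := by
        have : x' ∈ ({w} : Set (Fin m)) := by rw [heq]; simp
        simpa using this
      rw [hxw] at hxB' hyx hxz
      obtain ⟨u, v, hu, hv, humin, hvmax, huv⟩ :=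
        exists_minmax (hπ'.1.1 _ hBx) (hπ'.2.2 _ hBx)
      have huw : u < w := lt_of_le_of_lt (humin y hy) hyx
      have hwv : w < v := lt_of_lt_of_le hxz (hvmax z hz)
      have hBuv : B = {u, v} :=
        Uniq hπ' hBx h3x hxB' hu hv humin hvmax huw hwv hBG hd
      have hBBx : B = Bx := hπ'.1.2.2 _ hB _ hBx ⟨u, by rw [hBuv]; simp, hu⟩
      rw [hBBx] at h2; omega
    · have : y = w ∧ z = w := by
        constructor
        · have : y ∈ ({w} : Set (Fin m)) := by rw [heq]; simp
          simpa using this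
        · have : z ∈ ({w} : Set (Fin m)) := by rw [heq]; simp [Set.mem_insert_iff]
          simpa using this
      have hlt := minmax_lt hπ' hBx hyB hzB hymin hzmax
      rw [this.1, this.2] at hlt
      exact absurd hlt (lt_irrefl w)

lemma merged_big (hπ' : π' ∈ NCge2 m) {B : Set (Fin m)} (hB : B ∈ π')
    (h3 : 3 ≤ B.ncard) {u v : Fin m} (hu : u ∈ B) (hv : v ∈ B)
    (humin : ∀ c ∈ B, u ≤ c) (hvmax : ∀ c ∈ B, c ≤ v) :
    merged (Gmap π') ({u, v} : Set (Fin m)) = B := by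
  have hpairG : ({u, v} : Set (Fin m)) ∈ Gmap π' :=
    Or.inr (Or.inr ⟨B, hB, h3, u, hu, v, hv, humin, hvmax, rfl⟩)
  apply Set.Subset.antisymm
  · intro w hw
    rcases mem_merged_elim hw with h | ⟨hs, hd⟩
    · rcases h with rfl | rfl <;> assumption
    · obtain ⟨Bx, hBx, hsubx, hcase⟩ := G_elim hs
      rcases hcase with ⟨heq, hle⟩ | ⟨h3x, x', heq, hxB', ⟨y, hy, hyx⟩, ⟨z, hz, hxz⟩⟩ |
          ⟨h3x, y, z, heq, hyB, hzB, hymin, hzmax⟩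
      · exfalso
        have h1 : Bx.ncard = 1 := by rw [← heq]; exact Set.ncard_singleton w
        have := hπ'.2.2 _ hBx; omega
      · have hxw : x' = w := by
          have : x' ∈ ({w} : Set (Fin m)) := by rw [heq]; simp
          simpa using this
        rw [hxw] at hxB' hyx hxz
        obtain ⟨u', v', hu', hv', humin', hvmax', huv'⟩ :=
          exists_minmax (hπ'.1.1 _ hBx) (hπ'.2.2 _ hBx)
        have huw : u' < w := lt_of_le_of_lt (humin' y hy) hyx
        have hwv : w < v' := lt_of_lt_of_le hxz (hvmax' z hz)
        have hDuv : ({u, v} : Set (Fin m)) = {u', v'} :=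
          Uniq hπ' hBx h3x hxB' hu' hv' humin' hvmax' huw hwv hpairG hd
        have hu'B : u' ∈ ({u, v} : Set (Fin m)) := by rw [hDuv]; simp
        have hBBx : B = Bx := hπ'.1.2.2 _ hB _ hBx
          ⟨u', by rcases hu'B with rfl | rfl <;> assumption, hu'⟩
        rw [hBBx]; exact hxB'
      · exfalso
        have : y = w ∧ z = w := by
          constructor
          · have : y ∈ ({w} : Set (Fin m)) := by rw [heq]; simp
            simpa using this
          · have : z ∈ ({w} : Set (Fin m)) := by rw [heq]; simp [Set.mem_insert_iff]
            simpa using this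
        have hlt := minmax_lt hπ' hBx hyB hzB hymin hzmax
        rw [this.1, this.2] at hlt
        exact absurd hlt (lt_irrefl w)
  · intro w hwB
    by_cases hwu : w = u
    · exact subset_merged (by simp [hwu])
    · by_cases hwv : w = v
      · exact subset_merged (by simp [hwv])
      · have huw : u < w := lt_of_le_of_ne (humin w hwB) (Ne.symm hwu)
        have hwv' : w < v := lt_of_le_of_ne (hvmax w hwB) hwv
        refine Or.inr ⟨{w}, ?_, rfl, Fwd hπ' hB h3 hwB hu hv humin hvmax huw hwv'⟩
        exact Or.inr (Or.inl ⟨B, hB, h3, w, hwB, ⟨u, hu, huw⟩, ⟨v, hv, hwv'⟩, rfl⟩)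

lemma FG (hπ' : π' ∈ NCge2 m) : Fmap (Gmap π') = π' := by
  ext C
  constructor
  · rintro ⟨D, hD, hn2, rfl⟩
    obtain ⟨B, hB, hsubD, hcase⟩ := G_elim hD
    rcases hcase with ⟨rfl, hle⟩ | ⟨h3, x, rfl, -, -, -⟩ |
        ⟨h3, y, z, rfl, hyB, hzB, hymin, hzmax⟩
    · exact Set.mem_of_eq_of_mem (merged_small hπ' hB hn2 hD) hB
    · rw [Set.ncard_singleton] at hn2; omega
    · exact Set.mem_of_eq_of_mem (merged_big hπ' hB h3 hyB hzB hymin hzmax) hB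
  · intro hC
    by_cases h2 : C.ncard ≤ 2
    · have h2' : C.ncard = 2 := le_antisymm h2 (hπ'.2.2 _ hC)
      have hCG : C ∈ Gmap π' := Or.inl ⟨C, hC, h2, rfl⟩
      exact ⟨C, hCG, h2', (merged_small hπ' hC h2' hCG).symm⟩
    · have h3 : 3 ≤ C.ncard := by omega
      obtain ⟨u, v, hu, hv, humin, hvmax, huv⟩ :=
        exists_minmax (hπ'.1.1 _ hC) (hπ'.2.2 _ hC)
      refine ⟨{u, v}, Or.inr (Or.inr ⟨C, hC, h3, u, hu, v, hv, humin, hvmax, rfl⟩),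
        Set.ncard_pair huv.ne, (merged_big hπ' hC h3 hu hv humin hvmax).symm⟩

end Aux6

/-- The merging map F is a bijection from NC_{1<2}(m) onto NC_{≥2}(m). -/
theorem F_bijective (m : ℕ) :
    Set.BijOn (fun π : Set (Set (Fin m)) => Fmap π) (NC1lt2 m) (NCge2 m) := by
  refine ⟨fun π hπ => F_mapsTo hπ, ?_, ?_⟩
  · intro π1 h1 π2 h2 he
    have h : Gmap (Fmap π1) = Gmap (Fmap π2) := congrArg Gmap he
    rwa [GF h1, GF h2] at h
  · intro ρ hρ
    exact ⟨Gmap ρ, G_mapsTo hρ, FG hρ⟩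

end JM
end

section
/- Let a_1,...,a_m be transpositions in S_{2n+1} of the form a_i = (α_i, 2n+1). Suppose that for some index k, a_k ≠ a_i for all i ≠ k. Let σ_1 = a_1⋯a_{k-1} and σ_2 = a_{k+1}⋯a_m. Then |σ_1 a_k σ_2| = |σ_1 σ_2| + 1, where |σ| denotes the minimal number of transpositions needed to write σ as a product. -/
/-!
Conjugating by `σ₁` gives `σ₁ a_k σ₂ = (α_k, σ₁(2n+1)) σ₁ σ₂`, and `σ₁ σ₂` fixes `α_k` since
`a_k` is the only letter moving `α_k`. So it suffices that `|(x y) σ| = |σ| + 1` whenever `σ`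
fixes `x`. For the lower bound, take a word of transpositions with product `σ` whose first
letter `s` moves `x`. Unless `s` cancels against the next letter `t`, rewrite `s t = u v` with
`u` fixing `x` and `v` moving `x` (`u = t`, `v = t s t` if `t` fixes `x`; `u = s t s`, `v = s`
otherwise) and continue with `v`. As `σ` fixes `x`, `v` cannot survive to the end of the word,
so some cancellation removes two letters.
-/

namespace Equiv.Perm

variable {β : Type*} [DecidableEq β]

theorem IsSwap.conj {t : Perm β} (ht : t.IsSwap) (g : Perm β) : (g * t * g⁻¹).IsSwap := by
  obtain ⟨a, b, hab, rfl⟩ := ht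
  exact ⟨g a, g b, g.injective.ne hab, (swap_apply_apply g a b).symm⟩

theorem IsSwap.eq_swap_apply {s : Perm β} (hs : s.IsSwap) {x : β} (hx : s x ≠ x) :
    s = swap x (s x) := by
  obtain ⟨a, b, -, rfl⟩ := hs
  by_cases hxa : x = a
  · rw [hxa, swap_apply_left]
  by_cases hxb : x = b
  · rw [hxb, swap_apply_right, swap_comm]
  · exact absurd (swap_apply_of_ne_of_ne hxa hxb) hx

theorem IsSwap.exists_mul_eq_mul {s t : Perm β} {x : β} (hs : s.IsSwap) (ht : t.IsSwap)
    (hsx : s x ≠ x) (hts : t ≠ s) :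
    ∃ u v : Perm β, u.IsSwap ∧ v.IsSwap ∧ u x = x ∧ v x ≠ x ∧ s * t = u * v := by
  by_cases htx : t x = x
  · refine ⟨t, t⁻¹ * s * t, ht, by simpa using hs.conj t⁻¹, htx, ?_, by group⟩
    rwa [mul_apply, mul_apply, htx, Ne, inv_eq_iff_eq, htx]
  · refine ⟨s * t * s⁻¹, s, ht.conj s, hs, ?_, hsx, by group⟩
    rw [hs.eq_swap_apply hsx, ht.eq_swap_apply htx] at hts ⊢
    have hab : s x ≠ t x := fun h => hts (by rw [h])
    simp [swap_apply_of_ne_of_ne, *]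

theorem IsSwap.exists_prod_eq_mul_prod {s : Perm β} {l : List (Perm β)} {x : β}
    (hs : s.IsSwap) (hl : ∀ t ∈ l, t.IsSwap) (hsx : s x ≠ x) (hfix : (s * l.prod) x = x) :
    ∃ l' : List (Perm β), l'.length + 1 = l.length ∧ (∀ t ∈ l', t.IsSwap) ∧
      l'.prod = s * l.prod := by
  induction l generalizing s with
  | nil => exact absurd (by simpa using hfix) hsx
  | cons t rest ih =>
    rw [List.forall_mem_cons] at hl
    by_cases hts : t = s
    · refine ⟨rest, rfl, hl.2, ?_⟩
      obtain ⟨a, b, -, rfl⟩ := hs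
      rw [List.prod_cons, hts, swap_mul_self_mul]
    obtain ⟨u, v, hu, hv, hux, hvx, huv⟩ := hs.exists_mul_eq_mul hl.1 hsx hts
    have hvfix : (v * rest.prod) x = x := by
      refine u.injective ((?_ : _ = x).trans hux.symm)
      rwa [List.prod_cons, ← mul_assoc, huv, mul_assoc] at hfix
    obtain ⟨l', hlen, hl', hprod⟩ := ih hv hl.2 hvx hvfix
    refine ⟨u :: l', by simp [hlen], List.forall_mem_cons.2 ⟨hu, hl'⟩, ?_⟩
    rw [List.prod_cons, List.prod_cons, hprod, ← mul_assoc, ← mul_assoc, huv]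

end Equiv.Perm

namespace JM

open Equiv Equiv.Perm

section PermLength

variable {β : Type*} [DecidableEq β] [Fintype β]

theorem exists_length_eq_permLength (σ : Perm β) :
    ∃ l : List (Perm β), l.length = permLength σ ∧ (∀ t ∈ l, t.IsSwap) ∧ l.prod = σ := by
  obtain ⟨l, hprod, hl⟩ := (truncSwapFactors σ).out
  exact Nat.sInf_mem (s := {k | ∃ l : List (Perm β), l.length = k ∧ (∀ t ∈ l, t.IsSwap) ∧
    l.prod = σ}) ⟨l.length, l, rfl, hl, hprod⟩

theorem permLength_le_length {l : List (Perm β)} (hl : ∀ t ∈ l, t.IsSwap) :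
    permLength l.prod ≤ l.length :=
  Nat.sInf_le ⟨l, rfl, hl, rfl⟩

theorem permLength_swap_mul {x y : β} (hxy : x ≠ y) {σ : Perm β} (hσ : σ x = x) :
    permLength (swap x y * σ) = permLength σ + 1 := by
  have hswap : (swap x y).IsSwap := ⟨x, y, hxy, rfl⟩
  apply le_antisymm
  · obtain ⟨l, hlen, hl, rfl⟩ := exists_length_eq_permLength σ
    simpa [hlen] using permLength_le_length (List.forall_mem_cons.2 ⟨hswap, hl⟩)
  · obtain ⟨l, hlen, hl, hprod⟩ := exists_length_eq_permLength (swap x y * σ)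
    obtain ⟨l', hlen', hl', hprod'⟩ := hswap.exists_prod_eq_mul_prod hl
      (by rwa [swap_apply_left, ne_comm]) (by rwa [hprod, swap_mul_self_mul])
    rw [hprod, swap_mul_self_mul] at hprod'
    have hσ' : permLength σ ≤ l'.length := hprod' ▸ permLength_le_length hl'
    omega

end PermLength

theorem exists_ne_of_mem_take_ofFn {M : Type*} {m : ℕ} {f : Fin m → M} {k : Fin m} {t : M}
    (ht : t ∈ (List.ofFn f).take k) : ∃ i ≠ k, f i = t := by
  obtain ⟨j, hj, rfl⟩ := List.mem_take_iff_getElem.1 ht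
  simp only [List.length_ofFn, lt_min_iff] at hj
  exact ⟨⟨j, hj.2⟩, Fin.ne_of_val_ne (by dsimp only; omega), by simp⟩

theorem exists_ne_of_mem_drop_ofFn {M : Type*} {m : ℕ} {f : Fin m → M} {k : Fin m} {t : M}
    (ht : t ∈ (List.ofFn f).drop (k + 1)) : ∃ i ≠ k, f i = t := by
  obtain ⟨j, hj, rfl⟩ := List.mem_drop_iff_getElem.1 ht
  simp only [List.length_ofFn] at hj
  exact ⟨⟨k + 1 + j, by omega⟩, Fin.ne_of_val_ne (by dsimp only; omega), by simp⟩

/-- an unrepeated Jucys-Murphy transposition increases the length by one. -/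
theorem length_increase (n m : ℕ) (α : Fin m → Fin (2*n+1))
    (hα : ∀ i, α i ≠ jmTop n) (k : Fin m)
    (hk : ∀ i, i ≠ k → jmTuple α i ≠ jmTuple α k) :
    permLength (((List.ofFn (jmTuple α)).take (k : ℕ)).prod * jmTuple α k *
        ((List.ofFn (jmTuple α)).drop ((k : ℕ) + 1)).prod) =
      permLength (((List.ofFn (jmTuple α)).take (k : ℕ)).prod *
        ((List.ofFn (jmTuple α)).drop ((k : ℕ) + 1)).prod) + 1 := by
  have hfix : ∀ l : List (Perm (Fin (2*n+1))), (∀ t ∈ l, ∃ i ≠ k, jmTuple α i = t) →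
      l.prod (α k) = α k := fun l hl =>
    MulAction.mem_stabilizer_iff.1 <| Subgroup.list_prod_mem _ fun t ht => by
      obtain ⟨i, hi, rfl⟩ := hl t ht
      exact swap_apply_of_ne_of_ne (fun h => hk i hi (by simp only [jmTuple, h])) (hα k)
  set σ₁ := ((List.ofFn (jmTuple α)).take (k : ℕ)).prod
  set σ₂ := ((List.ofFn (jmTuple α)).drop ((k : ℕ) + 1)).prod
  have h₁ : σ₁ (α k) = α k := hfix _ fun _ => exists_ne_of_mem_take_ofFn
  have h₂ : σ₂ (α k) = α k := hfix _ fun _ => exists_ne_of_mem_drop_ofFn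
  have hconj : σ₁ * jmTuple α k * σ₂ = swap (α k) (σ₁ (jmTop n)) * (σ₁ * σ₂) := by
    rw [← h₁, swap_apply_apply, jmTuple]
    group
  rw [hconj, permLength_swap_mul (fun h => hα k (σ₁.injective (h₁.trans h)))
    (by rw [mul_apply, h₂, h₁])]

end JM
end

section
/- Let a_1,...,a_m be transpositions in S_{2n+1} of the form a_i = (α_i, 2n+1), and let π be the partition of {1,...,m} whose blocks group equal transpositions (j and k are in the same block iff a_j = a_k). Assume π is a pair partition (every block has exactly two elements). Then the product a_1 a_2 ⋯ a_m is the identity permutation if and only if π is non-crossing. -/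
/-!
Write `x = 2n+1` and read the product `(α₁ x)(α₂ x)⋯(α_m x)` as the word `α₁ α₂ ⋯ α_m`, in which
every letter occurs exactly twice; a crossing of the partition is a subword `u v u v` with `u ≠ v`.
An adjacent pair `y y` cancels in the product and neither creates nor destroys a crossing, so by
induction on the length it remains to treat a word `A y B y C` whose innermost pair `y B y` has
`B ≠ []`; the letters of `B` are then distinct. Such a word has a crossing, since the partner of a
letter of `B` lies in `A` or `C`. And its product does not fix `y`: the factors from `C` fix `y`,
the pair around `B` sends it to the last letter `b` of `B`, and the factors from `A` cannot send
`b` back to `y`, because they fix `y`.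
-/

namespace List

variable {γ : Type*}

theorem exists_eq_append_cons_append_cons_of_not_nodup {l : List γ} (h : ¬l.Nodup) :
    ∃ P b Q R, l = P ++ b :: (Q ++ b :: R) := by
  obtain ⟨b, hb⟩ : ∃ b, [b, b] <+ l := by simpa [nodup_iff_sublist] using h
  obtain ⟨r₁, r₂, rfl, hb₁, hb₂⟩ := cons_sublist_iff.1 hb
  obtain ⟨P, Q, rfl⟩ := append_of_mem hb₁
  obtain ⟨Q', R, rfl⟩ := append_of_mem (singleton_sublist.1 hb₂)
  exact ⟨P, b, Q ++ Q', R, by simp⟩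

theorem filter_ne_eq_self [DecidableEq γ] {y : γ} {l : List γ} (h : y ∉ l) :
    l.filter (· ≠ y) = l :=
  filter_eq_self.2 fun _ ha => by simpa using ne_of_mem_of_not_mem ha h

theorem count_ofFn [DecidableEq γ] {m : ℕ} (α : Fin m → γ) (a : γ) :
    (ofFn α).count a = {i | α i = a}.ncard := by
  rw [← Multiset.coe_count, ← Fin.univ_val_map, Multiset.count_map, Set.ncard_eq_toFinset_card']
  simp only [Set.toFinset_ofPred, eq_comm]
  rfl

theorem sublist_ofFn_iff {m : ℕ} {α : Fin m → γ} {l : List γ} :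
    l <+ ofFn α ↔ ∃ f : Fin l.length ↪o Fin m, ∀ i, l[i] = α (f i) := by
  rw [sublist_iff_exists_fin_orderEmbedding_get_eq]
  let e : Fin (ofFn α).length ≃o Fin m := Fin.castOrderIso length_ofFn
  constructor
  · rintro ⟨f, hf⟩
    exact ⟨f.trans e.toOrderEmbedding, fun i => (hf i).trans (get_ofFn α (f i))⟩
  · rintro ⟨f, hf⟩
    exact ⟨f.trans e.symm.toOrderEmbedding, fun i => (hf i).trans (get_ofFn α (e.symm (f i))).symm⟩

theorem cons_cons_cons_cons_sublist_ofFn_iff {m : ℕ} {α : Fin m → γ} {u v w z : γ} :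
    [u, v, w, z] <+ ofFn α ↔ ∃ i j k l : Fin m, i < j ∧ j < k ∧ k < l ∧
      α i = u ∧ α j = v ∧ α k = w ∧ α l = z := by
  rw [sublist_ofFn_iff]
  constructor
  · rintro ⟨f, hf⟩
    exact ⟨f 0, f 1, f 2, f 3, f.strictMono (by simp), f.strictMono (by simp [Fin.lt_def]),
      f.strictMono (by simp [Fin.lt_def]), (hf 0).symm, (hf 1).symm, (hf 2).symm, (hf 3).symm⟩
  · rintro ⟨i, j, k, l, hij, hjk, hkl, hi, hj, hk, hl⟩
    refine ⟨OrderEmbedding.ofStrictMono ![i, j, k, l] ?_, ?_⟩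
    · refine Fin.strictMono_iff_lt_succ.2 fun t => ?_
      fin_cases t <;> assumption
    · intro t
      fin_cases t <;> simp [*]

end List

namespace JM

open List

section Crossing

variable {β : Type*}

def HasCrossing (l : List β) : Prop := ∃ u v, u ≠ v ∧ [u, v, u, v] <+ l

lemma HasCrossing.mono {l₁ l₂ : List β} (h : l₁ <+ l₂) : HasCrossing l₁ → HasCrossing l₂ :=
  fun ⟨u, v, huv, hl⟩ => ⟨u, v, huv, hl.trans h⟩

lemma not_sublist_append_cons_cons {y w : β} {A C : List β} (hw : w ≠ y) (hA : y ∉ A)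
    (hC : y ∉ C) : ¬ [y, w, y] <+ A ++ y :: y :: C := by
  intro h
  obtain ⟨_ | ⟨a, l₁⟩, l₂, he, h₁, h₂⟩ := sublist_append_iff.1 h
  · obtain rfl : l₂ = [y, w, y] := he.symm
    simp only [sublist_cons_iff, cons.injEq, true_and, exists_eq_left', hw, false_and,
      exists_const, or_false, or_self_right] at h₂
    rcases h₂ with h₂ | h₂
    · exact hC (h₂.subset (by simp : y ∈ [y, w, y]))
    · exact hC (h₂.subset (by simp : y ∈ [w, y]))
  · obtain ⟨rfl, -⟩ := cons.inj he
    exact hA (h₁.subset mem_cons_self)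

lemma exists_innermost_pair {l : List β} (h : ¬l.Nodup) :
    ∃ A y B C, l = A ++ y :: (B ++ y :: C) ∧ (y :: B).Nodup := by
  classical
  have hex : ∃ d, ∃ A y B C, l = A ++ y :: (B ++ y :: C) ∧ B.length = d := by
    obtain ⟨A, y, B, C, hl⟩ := exists_eq_append_cons_append_cons_of_not_nodup h
    exact ⟨_, A, y, B, C, hl, rfl⟩
  obtain ⟨A, y, B, C, rfl, hB⟩ := Nat.find_spec hex
  refine ⟨A, y, B, C, rfl, not_not.1 fun hnd => ?_⟩
  obtain ⟨P, b, Q, R, hPQR⟩ := exists_eq_append_cons_append_cons_of_not_nodup hnd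
  have hQ : Q.length < Nat.find hex := by
    have := congrArg length hPQR
    simp only [length_cons, length_append] at this
    omega
  refine Nat.find_min hex hQ ⟨A ++ P, b, Q, R ++ y :: C, ?_, rfl⟩
  rw [← cons_append, hPQR]
  simp

lemma hasCrossing_of_mem_gap {y b : β} {A B C : List β} (hby : b ≠ y) (hbB : b ∈ B)
    (hbAC : b ∈ A ∨ b ∈ C) : HasCrossing (A ++ y :: (B ++ y :: C)) := by
  rcases hbAC with hbA | hbC
  · exact ⟨b, y, hby, (singleton_sublist.2 hbA).append
      (((singleton_sublist.2 hbB).append (singleton_sublist.2 mem_cons_self)).cons_cons y)⟩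
  · refine ⟨y, b, hby.symm, Sublist.trans ?_ (sublist_append_right A _)⟩
    exact ((singleton_sublist.2 hbB).append ((singleton_sublist.2 hbC).cons_cons y)).cons_cons y

variable [DecidableEq β]

lemma HasCrossing.of_append_cons_cons {y : β} {A C : List β} (hA : y ∉ A) (hC : y ∉ C)
    (h : HasCrossing (A ++ y :: y :: C)) : HasCrossing (A ++ C) := by
  obtain ⟨u, v, huv, hl⟩ := h
  refine ⟨u, v, huv, ?_⟩
  by_cases hu : u = y
  · subst hu
    exact absurd ((sublist_append_left _ [v]).trans hl)
      (not_sublist_append_cons_cons huv.symm hA hC)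
  by_cases hv : v = y
  · subst hv
    exact absurd ((sublist_cons_self u _).trans hl) (not_sublist_append_cons_cons huv hA hC)
  have := hl.filter (· ≠ y)
  rwa [filter_ne_eq_self (by simp [Ne.symm hu, Ne.symm hv]), filter_append, filter_ne_eq_self hA,
    filter_cons_of_neg (by simp), filter_cons_of_neg (by simp), filter_ne_eq_self hC] at this

lemma count_append_cons_append_cons (a y : β) (A B C : List β) :
    (A ++ y :: (B ++ y :: C)).count a =
      A.count a + B.count a + C.count a + if a = y then 2 else 0 := by
  by_cases h : a = y
  · subst h
    simp only [count_append, count_cons_self, if_pos]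
    omega
  · simp only [count_append, count_cons_of_ne (Ne.symm h), if_neg h]
    omega

def IsPairing (l : List β) : Prop := ∀ a ∈ l, l.count a = 2

lemma IsPairing.not_nodup {l : List β} (hl : IsPairing l) (hne : l ≠ []) : ¬l.Nodup :=
  fun hnd => by
    obtain ⟨a, ha⟩ := exists_mem_of_ne_nil l hne
    simpa [count_eq_one_of_mem hnd ha] using hl a ha

lemma IsPairing.of_append_cons_cons {y : β} {A C : List β} (hl : IsPairing (A ++ y :: y :: C)) :
    IsPairing (A ++ C) := by
  intro a ha
  have h₁ := hl a (by simp at ha ⊢; tauto)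
  have h₂ := count_pos_iff.2 ha
  simp only [count_append, count_cons, beq_iff_eq] at h₁ h₂ ⊢
  split_ifs at h₁ <;> omega

lemma IsPairing.notMem_outside_pair {y : β} {A B C : List β}
    (hl : IsPairing (A ++ y :: (B ++ y :: C))) : y ∉ A ∧ y ∉ C := by
  have := count_append_cons_append_cons y y A B C ▸ hl y (by simp)
  rw [if_pos rfl] at this
  exact ⟨count_eq_zero.1 (by omega), count_eq_zero.1 (by omega)⟩

lemma IsPairing.mem_outside_pair {y b : β} {A B C : List β}
    (hl : IsPairing (A ++ y :: (B ++ [b] ++ y :: C))) (hby : b ≠ y) (hbB : b ∉ B) :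
    b ∈ A ∨ b ∈ C := by
  have := count_append_cons_append_cons b y A (B ++ [b]) C ▸ hl b (by simp)
  rw [if_neg hby, count_append, count_singleton_self, count_eq_zero.2 hbB] at this
  rcases Nat.eq_zero_or_pos (A.count b) with h | h
  · exact Or.inr (count_pos_iff.1 (by omega))
  · exact Or.inl (count_pos_iff.1 h)

end Crossing

section StarProduct

variable {β : Type*} [DecidableEq β]

def starProd (x : β) (l : List β) : Equiv.Perm β := (l.map fun a => Equiv.swap a x).prod

@[simp] lemma starProd_nil (x : β) : starProd x [] = 1 := rfl

@[simp] lemma starProd_cons (x a : β) (l : List β) :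
    starProd x (a :: l) = Equiv.swap a x * starProd x l := by
  simp [starProd]

@[simp] lemma starProd_append (x : β) (l₁ l₂ : List β) :
    starProd x (l₁ ++ l₂) = starProd x l₁ * starProd x l₂ := by
  simp [starProd]

lemma starProd_apply_of_notMem {x c : β} {l : List β} (hc : c ≠ x) (hcl : c ∉ l) :
    starProd x l c = c := by
  induction l with
  | nil => rfl
  | cons a l ih =>
    rw [mem_cons, not_or] at hcl
    rw [starProd_cons, Equiv.Perm.mul_apply, ih hcl.2, Equiv.swap_apply_of_ne_of_ne hcl.1 hc]

lemma starProd_append_cons_cons (x y : β) (A C : List β) :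
    starProd x (A ++ y :: y :: C) = starProd x (A ++ C) := by
  simp [← mul_assoc]

lemma starProd_append_singleton_apply_self {x b : β} {l : List β} (hb : b ≠ x) (hbl : b ∉ l) :
    starProd x (l ++ [b]) x = b := by
  simp [starProd_apply_of_notMem hb hbl]

lemma starProd_append_cons_ne_one {x y b : β} {A B C : List β} (hyx : y ≠ x) (hbx : b ≠ x)
    (hyb : y ≠ b) (hyA : y ∉ A) (hbB : b ∉ B) (hyC : y ∉ C) :
    starProd x (A ++ y :: (B ++ [b] ++ y :: C)) ≠ 1 := by
  have hy : starProd x (A ++ y :: (B ++ [b] ++ y :: C)) y = starProd x A b := by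
    rw [starProd_append, starProd_cons, starProd_append, starProd_cons]
    simp only [Equiv.Perm.mul_apply, starProd_apply_of_notMem hyx hyC, Equiv.swap_apply_left,
      starProd_append_singleton_apply_self hbx hbB,
      Equiv.swap_apply_of_ne_of_ne (Ne.symm hyb) hbx]
  intro h
  rw [h, Equiv.Perm.one_apply, ← starProd_apply_of_notMem hyx hyA] at hy
  exact hyb ((starProd x A).injective hy)

theorem starProd_eq_one_iff_not_hasCrossing {x : β} {l : List β} (hx : x ∉ l)
    (hl : IsPairing l) : starProd x l = 1 ↔ ¬HasCrossing l := by
  induction hlen : l.length using Nat.strong_induction_on generalizing l with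
  | _ N ih =>
  rcases eq_or_ne l [] with rfl | hne
  · simp [HasCrossing]
  obtain ⟨A, y, B, C, rfl, hyB⟩ := exists_innermost_pair (hl.not_nodup hne)
  have hyAC := hl.notMem_outside_pair
  have hyx : y ≠ x := fun h => hx (h ▸ by simp)
  rcases B.eq_nil_or_concat' with rfl | ⟨B, b, rfl⟩
  · have hsub : A ++ C <+ A ++ y :: y :: C := by simp
    rw [nil_append] at hx hl ⊢
    rw [starProd_append_cons_cons, ih (A ++ C).length (by simp at hlen ⊢; omega)
      (fun h => hx (hsub.subset h)) hl.of_append_cons_cons rfl]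
    exact not_congr ⟨HasCrossing.mono hsub, HasCrossing.of_append_cons_cons hyAC.1 hyAC.2⟩
  · have hbx : b ≠ x := fun h => hx (h ▸ by simp)
    obtain ⟨hyb, hbB⟩ : y ≠ b ∧ b ∉ B := by
      have : (y ∉ B ∧ y ≠ b) ∧ B.Nodup ∧ ∀ a ∈ B, a ≠ b := by simpa [nodup_append] using hyB
      exact ⟨this.1.2, fun h => this.2.2 b h rfl⟩
    refine iff_of_false (starProd_append_cons_ne_one hyx hbx hyb hyAC.1 hbB hyAC.2)
      (not_not_intro ?_)
    exact hasCrossing_of_mem_gap (Ne.symm hyb) (mem_append_right B (mem_singleton_self b))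
      (hl.mem_outside_pair (Ne.symm hyb) hbB)

end StarProduct

lemma hasCrossing_ofFn_iff {γ : Type*} {m : ℕ} (α : Fin m → γ) :
    HasCrossing (ofFn α) ↔ ¬Noncrossing (eqPartition α) := by
  simp only [HasCrossing, cons_cons_cons_cons_sublist_ofFn_iff, Noncrossing, eqPartition,
    Set.mem_ofPred_eq, not_forall, not_not]
  constructor
  · rintro ⟨_, _, hne, i, j, k, l, hij, hjk, hkl, rfl, rfl, hk, hl⟩
    refine ⟨_, ⟨i, rfl⟩, _, ⟨j, rfl⟩, fun h => hne ?_, i, j, k, l, hij, hjk, hkl, rfl, hk, rfl, hl⟩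
    exact (h ▸ rfl : i ∈ {t | α t = α j})
  · rintro ⟨_, ⟨a, rfl⟩, _, ⟨b, rfl⟩, hne, i, j, k, l, hij, hjk, hkl, hi, hk, hj, hl⟩
    refine ⟨α i, α j, fun h => hne ?_, i, j, k, l, hij, hjk, hkl, rfl, rfl, hk.trans hi.symm,
      hl.trans hj.symm⟩
    have hi' : α i = α a := hi
    have hj' : α j = α b := hj
    ext t
    simp only [Set.mem_ofPred_eq, ← hi', ← hj', h]

/-- for a pair equality partition, the product of the Jucys-Murphy
transpositions is the identity iff the partition is non-crossing. -/
theorem identity_iff_noncrossing (n m : ℕ) (α : Fin m → Fin (2*n+1))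
    (hα : ∀ i, α i ≠ jmTop n)
    (hpair : ∀ j : Fin m, Set.ncard {i | α i = α j} = 2) :
    (List.ofFn (jmTuple α)).prod = 1 ↔ Noncrossing (eqPartition α) := by
  have hprod : (List.ofFn (jmTuple α)).prod = starProd (jmTop n) (List.ofFn α) := by
    rw [starProd, map_ofFn]
    rfl
  have hx : jmTop n ∉ List.ofFn α := by
    simpa [mem_ofFn] using hα
  have hl : IsPairing (List.ofFn α) := by
    simpa [IsPairing, mem_ofFn, count_ofFn] using hpair
  rw [hprod, starProd_eq_one_iff_not_hasCrossing hx hl, hasCrossing_ofFn_iff, not_not]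

end JM
end

section
/- Let a_1,...,a_m be transpositions a_i = (α_i, 2n+1) in S_{2n+1} whose associated equality partition π lies in NC_{1,2}(m). If π has no singleton blocks that are non-inner (i.e., every singleton block is an inner block of some two-element block), then 2n+1 is a fixed point of the product a_1 a_2 ⋯ a_m. -/
namespace JM

/-!
Follow the point `t` through the product, reading it from the right. The last index is not a
singleton block (a singleton lies strictly inside a pair), so it is paired with an earlier index
`i`: the last transposition sends `t` to `α i`, the transpositions strictly between fix `α i`
because blocks have at most two elements, and the `i`-th one sends it back to `t`. As the
partition is non-crossing, no block meets both sides of `i`, so the argument repeats on the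
prefix before `i`.
-/

open Equiv

section SwapProducts

variable {X : Type*} [DecidableEq X] {m : ℕ} (α : Fin m → X) (t : X)

def prefixSwapProd (k : ℕ) : Perm X :=
  ((List.ofFn fun i => swap (α i) t).take k).prod

@[simp]
lemma prefixSwapProd_zero : prefixSwapProd α t 0 = 1 := by
  simp [prefixSwapProd]

lemma prefixSwapProd_succ {k : ℕ} (hk : k < m) :
    prefixSwapProd α t (k + 1) = prefixSwapProd α t k * swap (α ⟨k, hk⟩) t := by
  rw [prefixSwapProd, prefixSwapProd, List.prod_take_succ _ _ (by simpa using hk)]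
  simp

lemma prefixSwapProd_apply_of_forall_ne {a b : ℕ} (hab : a ≤ b) (hb : b ≤ m) {c : X}
    (hct : c ≠ t) (hne : ∀ i : Fin m, a ≤ i → (i : ℕ) < b → α i ≠ c) :
    prefixSwapProd α t b c = prefixSwapProd α t a c := by
  induction b, hab using Nat.le_induction with
  | base => rfl
  | succ b hab ih =>
    rw [prefixSwapProd_succ α t (by omega), Perm.mul_apply,
      swap_apply_of_ne_of_ne (hne ⟨b, _⟩ hab (Nat.lt_succ_self b)).symm hct,
      ih (by omega) fun i hai hib => hne i hai (by omega)]

lemma prefixSwapProd_apply_of_pair {i k : Fin m} (hik : i < k) (hkt : α k ≠ t)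
    (heq : α i = α k) (hmid : ∀ x, i < x → x < k → α x ≠ α k) :
    prefixSwapProd α t (k + 1) t = prefixSwapProd α t i t :=
  calc prefixSwapProd α t (k + 1) t = prefixSwapProd α t k (α k) := by
        rw [prefixSwapProd_succ α t k.isLt, Perm.mul_apply, swap_apply_right]
    _ = prefixSwapProd α t (i + 1) (α k) :=
        prefixSwapProd_apply_of_forall_ne α t hik k.isLt.le hkt hmid
    _ = prefixSwapProd α t i t := by
        rw [prefixSwapProd_succ α t i.isLt, Perm.mul_apply, heq, swap_apply_left]

end SwapProducts

section EqPartition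

variable {X : Type*} {m : ℕ} (α : Fin m → X)

lemma eq_of_noncrossing_eqPartition (hnc : Noncrossing (eqPartition α)) {k₁ l₁ k₂ l₂ : Fin m}
    (h₁ : k₁ < l₁) (h₂ : l₁ < k₂) (h₃ : k₂ < l₂) (hk : α k₁ = α k₂) (hl : α l₁ = α l₂) :
    α k₁ = α l₁ := by
  by_contra hne
  refine hnc _ ⟨k₁, rfl⟩ _ ⟨l₁, rfl⟩ (fun h => hne ?_)
    ⟨k₁, l₁, k₂, l₂, h₁, h₂, h₃, rfl, hk.symm, rfl, hl.symm⟩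
  exact (Set.ext_iff.mp h k₁).mp rfl

lemma eq_or_eq_or_eq_of_ncard_le_two (hsize : ∀ B ∈ eqPartition α, B.ncard ≤ 2) {a b c : Fin m}
    (hab : α a = α b) (hac : α a = α c) : a = b ∨ a = c ∨ b = c := by
  by_contra! hne
  have hsub : ({a, b, c} : Set (Fin m)) ⊆ {i | α i = α a} := by
    rintro x (rfl | rfl | rfl)
    exacts [rfl, hab.symm, hac.symm]
  have := Set.ncard_le_ncard hsub
  rw [Set.ncard_eq_three.mpr ⟨a, b, c, hne.1, hne.2.1, hne.2.2, rfl⟩] at this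
  have := hsize _ ⟨a, rfl⟩
  omega

lemma exists_lt_lt_of_inner {B B' : Set (Fin m)} (hB' : B' ∈ eqPartition α) (hinner : Inner B B')
    {k : Fin m} (hk : k ∈ B) : ∃ p q, p < k ∧ k < q ∧ α p = α q := by
  obtain ⟨w, rfl⟩ := hB'
  obtain ⟨⟨p, hp, hpk⟩, ⟨q, hq, hkq⟩⟩ := hinner
  exact ⟨p, q, hpk k hk, hkq k hk, hp.trans hq.symm⟩

def IsClosedPrefix (j : ℕ) : Prop :=
  ∀ i i' : Fin m, α i = α i' → (i : ℕ) < j → (i' : ℕ) < j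

variable {α}

lemma IsClosedPrefix.exists_lt_apply_eq
    (hinner : ∀ B ∈ eqPartition α, B.ncard = 1 → ∃ B' ∈ eqPartition α, Inner B B') {k : Fin m}
    (hclosed : IsClosedPrefix α (k + 1)) : ∃ i < k, α i = α k := by
  by_contra! hsingle
  have hB : {i | α i = α k} = {k} := by
    refine Set.ext fun i => ⟨fun h => ?_, fun h => h ▸ rfl⟩
    have : (i : ℕ) < k + 1 := hclosed k i h.symm (by omega)
    have : ¬ i < k := fun hik => hsingle i hik h
    show i = k
    omega
  obtain ⟨B', hB', hin⟩ := hinner _ ⟨k, rfl⟩ (by rw [hB, Set.ncard_singleton])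
  obtain ⟨p, q, hpk, hkq, hpq⟩ := exists_lt_lt_of_inner α hB' hin (rfl : α k = α k)
  have := hclosed p q hpq (by omega)
  omega

lemma IsClosedPrefix.of_pair (hnc : Noncrossing (eqPartition α))
    (hsize : ∀ B ∈ eqPartition α, B.ncard ≤ 2) {i k : Fin m}
    (hclosed : IsClosedPrefix α (k + 1)) (hik : i < k) (heq : α i = α k) :
    IsClosedPrefix α i := by
  intro x y hxy hxi
  have hxk : α x ≠ α k := fun h => by
    rcases eq_or_eq_or_eq_of_ncard_le_two α hsize (h.trans heq.symm) h with h | h | h <;> omega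
  have hy : (y : ℕ) < k + 1 := hclosed x y hxy (by omega)
  by_contra! hiy
  have hyi : y ≠ i := by rintro rfl; exact hxk (hxy.trans heq)
  have hyk : y ≠ k := by rintro rfl; exact hxk hxy
  exact hxk ((eq_of_noncrossing_eqPartition α hnc hxi (by omega) (by omega) hxy heq).trans heq)

end EqPartition

theorem prefixSwapProd_apply_self {X : Type*} [DecidableEq X] {m : ℕ} {α : Fin m → X} {t : X}
    (hα : ∀ i, α i ≠ t) (hnc : Noncrossing (eqPartition α))
    (hsize : ∀ B ∈ eqPartition α, B.ncard ≤ 2)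
    (hinner : ∀ B ∈ eqPartition α, B.ncard = 1 → ∃ B' ∈ eqPartition α, Inner B B') :
    ∀ j ≤ m, IsClosedPrefix α j → prefixSwapProd α t j t = t := by
  intro j
  induction j using Nat.strong_induction_on with
  | _ j ih =>
  intro hjm hclosed
  cases j with
  | zero => simp
  | succ k =>
  obtain ⟨K, rfl⟩ : ∃ K : Fin m, (K : ℕ) = k := ⟨⟨k, hjm⟩, rfl⟩
  obtain ⟨i, hiK, heq⟩ := hclosed.exists_lt_apply_eq hinner
  have hmid : ∀ x, i < x → x < K → α x ≠ α K := fun x hix hxK h => by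
    rcases eq_or_eq_or_eq_of_ncard_le_two α hsize (heq.trans h.symm) heq with h | h | h <;> omega
  rw [prefixSwapProd_apply_of_pair α t hiK (hα K) heq hmid]
  exact ih i (by omega) (by omega) (hclosed.of_pair hnc hsize hiK heq)

/-- if every singleton block is inner to a two-element block, then 2n+1 is
a fixed point of the product. -/
theorem top_fixed (n m : ℕ) (α : Fin m → Fin (2*n+1))
    (hα : ∀ i, α i ≠ jmTop n)
    (hnc : Noncrossing (eqPartition α))
    (hsize : ∀ B ∈ eqPartition α, B.ncard = 1 ∨ B.ncard = 2)
    (hinner : ∀ B ∈ eqPartition α, B.ncard = 1 →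
      ∃ B' ∈ eqPartition α, B'.ncard = 2 ∧ Inner B B') :
    ((List.ofFn (jmTuple α)).prod) (jmTop n) = jmTop n := by
  have hsize' : ∀ B ∈ eqPartition α, B.ncard ≤ 2 := fun B hB => by
    rcases hsize B hB with h | h <;> omega
  have hinner' : ∀ B ∈ eqPartition α, B.ncard = 1 → ∃ B' ∈ eqPartition α, Inner B B' :=
    fun B hB h => (hinner B hB h).imp fun _ ⟨hB', _, hin⟩ => ⟨hB', hin⟩
  have := prefixSwapProd_apply_self hα hnc hsize' hinner' m le_rfl fun _ i _ _ => i.isLt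
  rwa [prefixSwapProd, List.take_of_length_le (by simp)] at this

end JM
end

section
/- Let a_1,...,a_m be transpositions a_i = (α_i, 2n+1) in S_{2n+1} whose associated equality partition π lies in NC_{1,2}(m), with distinct blocks corresponding to distinct α values. Let {p,r} (p < r) be a two-element block of π, say with a_p = a_r = (α, 2n+1), and let j_1 < ... < j_l be the elements of the direct inner singleton blocks of {p,r}. Then (α, α_{j_l}, ..., α_{j_1}) is a cycle of the product a_1⋯a_m; if {p,r} has no direct inner singleton blocks then α is a fixed point of the product. -/
namespace JM

section Aux

variable {m : ℕ} {β : Type*}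

/-- `j` is covered by an arc inside `(p, c)`. -/
def Cov (α : Fin m → β) (p : Fin m) (c : ℕ) (j : Fin m) : Prop :=
  ∃ u s : Fin m, u < s ∧ α u = α s ∧ u ≠ s ∧ p < u ∧ u < j ∧ j < s ∧ (s : ℕ) < c

/-- `j` is a direct inner singleton of the interval `(p, c)`. -/
def Dm (α : Fin m → β) (p : Fin m) (c : ℕ) (j : Fin m) : Prop :=
  (∀ t, α t = α j → t = j) ∧ p < j ∧ (j : ℕ) < c ∧ ¬ Cov α p c j

/-- The interval `(p, c)` is closed under blocks. -/
def ClosedIv (α : Fin m → β) (p : Fin m) (c : ℕ) : Prop :=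
  ∀ t : Fin m, p < t → (t : ℕ) < c → ∀ t', α t' = α t → p < t' ∧ (t' : ℕ) < c

lemma cross (α : Fin m → β) (hnc : Noncrossing (eqPartition α))
    (a b x y : Fin m) (hab : α a = α b) (hxy : α x = α y) (hne : α a ≠ α x)
    (h1 : a < x) (h2 : x < b) (h3 : b < y) : False := by
  have hB : {i | α i = α a} ∈ eqPartition α := ⟨a, rfl⟩
  have hB' : {i | α i = α x} ∈ eqPartition α := ⟨x, rfl⟩
  have hne' : ({i | α i = α a} : Set (Fin m)) ≠ {i | α i = α x} := by
    intro h
    have hx : x ∈ ({i | α i = α a} : Set (Fin m)) := by rw [h]; exact rfl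
    exact hne (Set.mem_setOf_eq ▸ hx).symm
  exact hnc _ hB _ hB' hne'
    ⟨a, x, b, y, h1, h2, h3, rfl, hab.symm, rfl, hxy.symm⟩

lemma partner (α : Fin m → β)
    (hsize : ∀ B ∈ eqPartition α, B.ncard = 1 ∨ B.ncard = 2)
    (i u v : Fin m) (hu : α u = α i) (hv : α v = α i) (hui : u ≠ i) (hvi : v ≠ i) :
    u = v := by
  by_contra huv
  have hB : {t | α t = α i} ∈ eqPartition α := ⟨i, rfl⟩
  have h3 : ({u, v, i} : Set (Fin m)).ncard = 3 := by
    rw [Set.ncard_eq_three]; exact ⟨u, v, i, huv, hui, hvi, rfl⟩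
  have hsub : ({u, v, i} : Set (Fin m)) ⊆ {t | α t = α i} := by
    intro t ht
    rcases ht with rfl | rfl | rfl
    · exact hu
    · exact hv
    · exact rfl
  have hle := Set.ncard_le_ncard hsub (Set.toFinite _)
  rcases hsize _ hB with h | h <;> omega

lemma prod_apply_of_fix (l : List (Equiv.Perm β)) (x : β)
    (h : ∀ g ∈ l, g x = x) : l.prod x = x := by
  induction l with
  | nil => simp
  | cons a t ih =>
    simp only [List.prod_cons, Equiv.Perm.mul_apply]
    rw [ih fun g hg => h g (by simp [hg]), h a (by simp)]

lemma take_succ_prod (f : Fin m → Equiv.Perm β) (c : ℕ) (hc : c < m) :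
    ((List.ofFn f).take (c + 1)).prod = ((List.ofFn f).take c).prod * f ⟨c, hc⟩ := by
  have hlen : c < (List.ofFn f).length := by simpa using hc
  rw [List.take_succ, List.getElem?_eq_getElem hlen]
  simp [List.prod_append]

lemma take_eval (f : Fin m → Equiv.Perm β) (c₁ c₂ : ℕ) (h12 : c₁ ≤ c₂) (h2 : c₂ ≤ m)
    (x : β) (hfix : ∀ (i : ℕ) (hi : i < m), c₁ ≤ i → i < c₂ → f ⟨i, hi⟩ x = x) :
    ((List.ofFn f).take c₂).prod x = ((List.ofFn f).take c₁).prod x := by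
  induction c₂, h12 using Nat.le_induction with
  | base => rfl
  | succ c hc ih =>
    have hcm : c < m := by omega
    rw [take_succ_prod f c hcm, Equiv.Perm.mul_apply, hfix c hcm hc (by omega)]
    exact ih (by omega) (fun i hi ha hb => hfix i hi ha (by omega))

lemma Dm_lift (α : Fin m → β) (p s j : Fin m) (c : ℕ)
    (hs : Dm α p c s) (hj : Dm α p ((s : ℕ)) j) : Dm α p c j := by
  obtain ⟨s1, s2, s3, s4⟩ := hs
  obtain ⟨h1, h2, h3, h4⟩ := hj
  refine ⟨h1, h2, by omega, ?_⟩
  rintro ⟨u, v, a1, a2, a3, a4, a5, a6, a7⟩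
  have hvs : v ≠ s := by rintro rfl; exact a3 (s1 u a2)
  rcases lt_or_gt_of_ne (fun h : (v : ℕ) = (s : ℕ) => hvs (Fin.ext h)) with h | h
  · exact h4 ⟨u, v, a1, a2, a3, a4, a5, a6, h⟩
  · refine s4 ⟨u, v, a1, a2, a3, a4, ?_, ?_, a7⟩
    · have := Fin.lt_def.1 a5; exact Fin.lt_def.2 (by omega)
    · exact Fin.lt_def.2 h

lemma closed_sub (α : Fin m → β) (p s : Fin m) (c : ℕ)
    (hcl : ClosedIv α p c) (hs : Dm α p c s) : ClosedIv α p ((s : ℕ)) := by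
  obtain ⟨s1, s2, s3, s4⟩ := hs
  intro t hpt hts t' ht'
  have h := hcl t hpt (by omega) t' ht'
  refine ⟨h.1, ?_⟩
  by_contra hge
  push_neg at hge
  have ht's : t' ≠ s := by
    intro hh
    have h2 : t = s := s1 t (ht'.symm.trans (congrArg α hh))
    have := congrArg Fin.val h2
    omega
  have hst' : (s : ℕ) < (t' : ℕ) :=
    lt_of_le_of_ne hge (fun hh => ht's (Fin.ext hh.symm))
  have htt' : t ≠ t' := by intro hh; rw [hh] at hts; omega
  exact s4 ⟨t, t', Fin.lt_def.2 (by omega), ht'.symm, htt', hpt,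
    Fin.lt_def.2 hts, Fin.lt_def.2 hst', h.2⟩

lemma descent [DecidableEq β] (α : Fin m → β) (T : β)
    (hα : ∀ i, α i ≠ T)
    (hnc : Noncrossing (eqPartition α))
    (hsize : ∀ B ∈ eqPartition α, B.ncard = 1 ∨ B.ncard = 2) :
    ∀ c : ℕ, c ≤ m → ∀ p : Fin m, (p : ℕ) < c → ClosedIv α p c →
    ((¬ ∃ j, Dm α p c j) →
      ((List.ofFn (fun i => Equiv.swap (α i) T)).take c).prod T
        = ((List.ofFn (fun i => Equiv.swap (α i) T)).take ((p : ℕ) + 1)).prod T) ∧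
    (∀ j, Dm α p c j → (∀ j', Dm α p c j' → j' ≤ j) →
      ((List.ofFn (fun i => Equiv.swap (α i) T)).take c).prod T = α j) := by
  intro c
  induction c using Nat.strong_induction_on with
  | _ c IH =>
  intro hcm p hpc hclosed
  by_cases hc1 : c = (p : ℕ) + 1
  · constructor
    · intro _; rw [hc1]
    · rintro j ⟨_, h2, h3, _⟩ _
      exfalso
      have := Fin.lt_def.1 h2
      omega
  · have hc2 : (p : ℕ) + 1 < c := by omega
    have him : c - 1 < m := by omega
    set i : Fin m := ⟨c - 1, him⟩ with hi
    have hival : (i : ℕ) = c - 1 := rfl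
    have hpi : p < i := Fin.lt_def.2 (by omega)
    have hic : (i : ℕ) < c := by omega
    have hstep : ((List.ofFn (fun t => Equiv.swap (α t) T)).take c).prod T
        = ((List.ofFn (fun t => Equiv.swap (α t) T)).take (c - 1)).prod (α i) := by
      have hc' : c = (c - 1) + 1 := by omega
      rw [hc', take_succ_prod _ (c - 1) him, Equiv.Perm.mul_apply]
      congr 1
      exact Equiv.swap_apply_right _ _
    by_cases hsing : ∀ t, α t = α i → t = i
    · have hval : ((List.ofFn (fun t => Equiv.swap (α t) T)).take c).prod T = α i := by
        rw [hstep, take_eval _ 0 (c - 1) (by omega) (by omega) (α i) ?_]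
        · simp
        · intro t ht _ htc
          refine Equiv.swap_apply_of_ne_of_ne ?_ (hα i)
          intro hh
          have := hsing ⟨t, ht⟩ hh.symm
          rw [Fin.ext_iff] at this
          simp at this
          omega
      have hDi : Dm α p c i := by
        refine ⟨hsing, hpi, hic, ?_⟩
        rintro ⟨u, s, _, _, _, _, _, his, hsc⟩
        have := Fin.lt_def.1 his
        omega
      constructor
      · intro hno; exact absurd ⟨i, hDi⟩ hno
      · intro j hj hmax
        have h1 := Fin.le_def.1 (hmax i hDi)
        have h2 : (j : ℕ) < c := hj.2.2.1
        have hji : j = i := Fin.ext (by omega)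
        rw [hval, hji]
    · push_neg at hsing
      obtain ⟨u, hu_eq, hu_ne⟩ := hsing
      have hclu := hclosed i hpi hic u hu_eq
      have hune : (u : ℕ) ≠ (i : ℕ) := fun hh => hu_ne (Fin.ext hh)
      have hui : (u : ℕ) < (i : ℕ) := by have := hclu.2; omega
      have hpu : (p : ℕ) < (u : ℕ) := Fin.lt_def.1 hclu.1
      have hpart : ∀ t, α t = α i → t = u ∨ t = i := by
        intro t ht
        by_cases h : t = i
        · right; exact h
        · left; exact partner α hsize i t u ht hu_eq h hu_ne
      have hchain : ((List.ofFn (fun t => Equiv.swap (α t) T)).take c).prod T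
          = ((List.ofFn (fun t => Equiv.swap (α t) T)).take ((u : ℕ))).prod T := by
        rw [hstep, take_eval _ ((u : ℕ) + 1) (c - 1) (by omega) (by omega) (α i) ?_]
        · rw [take_succ_prod _ (u : ℕ) (by omega), Equiv.Perm.mul_apply]
          congr 1
          have : (⟨(u : ℕ), by omega⟩ : Fin m) = u := rfl
          rw [this, ← hu_eq]
          exact Equiv.swap_apply_left _ _
        · intro t ht h1 h2
          refine Equiv.swap_apply_of_ne_of_ne ?_ (hα i)
          intro hh
          rcases hpart ⟨t, ht⟩ hh.symm with h' | h' <;>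
            (rw [Fin.ext_iff] at h'; simp at h'; omega)
      have hcl' : ClosedIv α p ((u : ℕ)) := by
        intro t hpt htu t' ht'
        have htc : (t : ℕ) < c := by omega
        have h := hclosed t hpt htc t' ht'
        refine ⟨h.1, ?_⟩
        by_contra hge
        push_neg at hge
        have hti : α t ≠ α i := by
          intro hh
          rcases hpart t hh with rfl | rfl <;> omega
        have ht'u : t' ≠ u := by
          rintro rfl
          exact hti (ht'.symm.trans hu_eq)
        have ht'i : t' ≠ i := by
          rintro rfl
          exact hti ht'.symm
        have h2 : (t' : ℕ) < c - 1 := by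
          have := h.2
          have : (t' : ℕ) ≠ (i : ℕ) := fun hh => ht'i (Fin.ext hh)
          omega
        have hut' : (u : ℕ) < (t' : ℕ) :=
          lt_of_le_of_ne hge (fun hh => ht'u (Fin.ext hh.symm))
        exact cross α hnc t t' u i ht'.symm hu_eq
          (fun hh => hti (hh.trans hu_eq))
          (Fin.lt_def.2 htu) (Fin.lt_def.2 hut') (Fin.lt_def.2 (by omega))
      obtain ⟨IH1, IH2⟩ := IH (u : ℕ) (by omega) (by omega) p hpu hcl'
      have hDiff : ∀ j, Dm α p c j ↔ Dm α p ((u : ℕ)) j := by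
        intro j
        constructor
        · rintro ⟨h1, h2, h3, h4⟩
          have hju : j ≠ u := by
            rintro rfl
            exact hu_ne (h1 i hu_eq.symm).symm
          have hji : j ≠ i := by
            rintro rfl
            exact hu_ne (h1 u hu_eq)
          have hjui : (j : ℕ) < (u : ℕ) := by
            by_contra hge
            push_neg at hge
            have huj : (u : ℕ) < (j : ℕ) :=
              lt_of_le_of_ne hge (fun hh => hju (Fin.ext hh.symm))
            have hjival : (j : ℕ) < (i : ℕ) := by
              have : (j : ℕ) ≠ (i : ℕ) := fun hh => hji (Fin.ext hh)
              omega
            exact h4 ⟨u, i, Fin.lt_def.2 hui, hu_eq, hu_ne, hclu.1,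
              Fin.lt_def.2 huj, Fin.lt_def.2 hjival, hic⟩
          refine ⟨h1, h2, hjui, ?_⟩
          rintro ⟨u', s', a1, a2, a3, a4, a5, a6, a7⟩
          exact h4 ⟨u', s', a1, a2, a3, a4, a5, a6, by omega⟩
        · rintro ⟨h1, h2, h3, h4⟩
          refine ⟨h1, h2, by omega, ?_⟩
          rintro ⟨u', s', a1, a2, a3, a4, a5, a6, a7⟩
          have hs'u : s' ≠ u := by
            rintro rfl
            rcases hpart u' (a2.trans hu_eq) with rfl | rfl
            · exact a3 rfl
            · have := Fin.lt_def.1 a5; omega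
          have hs'i : s' ≠ i := by
            rintro rfl
            rcases hpart u' a2 with rfl | rfl
            · have := Fin.lt_def.1 a5; omega
            · exact a3 rfl
          have hv1 : (s' : ℕ) ≠ (u : ℕ) := fun hh => hs'u (Fin.ext hh)
          have hv2 : (s' : ℕ) ≠ (i : ℕ) := fun hh => hs'i (Fin.ext hh)
          rcases lt_or_gt_of_ne hv1 with h | h
          · exact h4 ⟨u', s', a1, a2, a3, a4, a5, a6, h⟩
          · have hu'u : (u' : ℕ) < (u : ℕ) := by
              have := Fin.lt_def.1 a5; omega
            have hαne : α u' ≠ α u := by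
              intro hh
              rcases hpart u' (hh.trans hu_eq) with rfl | rfl
              · omega
              · have := Fin.lt_def.1 a5; omega
            exact cross α hnc u' s' u i a2 hu_eq hαne
              (Fin.lt_def.2 hu'u) (Fin.lt_def.2 h) (Fin.lt_def.2 (by omega))
      constructor
      · intro hno
        rw [hchain, IH1 (fun ⟨j, hj⟩ => hno ⟨j, (hDiff j).2 hj⟩)]
      · intro j hj hmax
        rw [hchain, IH2 j ((hDiff j).1 hj) (fun j' hj' => hmax j' ((hDiff j').2 hj'))]

end Aux

/-- the cycle of the product attached to a two-element block {p,r} is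
(α, α_{j_l}, …, α_{j_1}) where j_1 < … < j_l enumerate the direct inner singleton
blocks of {p,r}; if there are none, α is a fixed point. -/
theorem pair_block_cycle (n m k : ℕ) (α : Fin m → Fin (2*n+1))
    (hα : ∀ i, α i ≠ jmTop n)
    (hnc : Noncrossing (eqPartition α))
    (hsize : ∀ B ∈ eqPartition α, B.ncard = 1 ∨ B.ncard = 2)
    (p r : Fin m) (hpr : p < r) (hblock : α p = α r)
    (hexact : ∀ j, α j = α p → j = p ∨ j = r)
    (e : Fin k → Fin m) (he : StrictMono e)
    (henum : ∀ i : Fin m,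
      ((∀ j, α j = α i → j = i) ∧ p < i ∧ i < r ∧
        ¬ ∃ p' r' : Fin m, p' < r' ∧ α p' = α r' ∧ p' ≠ r' ∧
          p < p' ∧ p' < i ∧ i < r' ∧ r' < r) ↔ ∃ j, e j = i) :
    (k = 0 → ((List.ofFn (jmTuple α)).prod) (α p) = α p) ∧
    (∀ hk : 0 < k, ((List.ofFn (jmTuple α)).prod) (α p) =
      α (e ⟨k - 1, Nat.sub_lt hk Nat.one_pos⟩)) ∧
    (∀ j : Fin k, (j : ℕ) = 0 → ((List.ofFn (jmTuple α)).prod) (α (e j)) = α p) ∧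
    (∀ j j' : Fin k, (j' : ℕ) + 1 = (j : ℕ) →
      ((List.ofFn (jmTuple α)).prod) (α (e j)) = α (e j')) := by
  classical
  have hpr' : (p : ℕ) < (r : ℕ) := Fin.lt_def.1 hpr
  set T := jmTop n with hT
  set f : Fin m → Equiv.Perm (Fin (2*n+1)) := fun i => Equiv.swap (α i) T with hf
  have hofn : List.ofFn (jmTuple α) = List.ofFn f := rfl
  rw [hofn]
  have hprm : (List.ofFn f).prod = ((List.ofFn f).take m).prod := by
    rw [List.take_of_length_le (by simp)]
  have hcl : ClosedIv α p ((r : ℕ)) := by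
    intro t hpt htr t' ht'
    have hpt' : (p : ℕ) < (t : ℕ) := Fin.lt_def.1 hpt
    have htp : α t ≠ α p := by
      intro hh
      rcases hexact t hh with rfl | rfl
      · omega
      · omega
    have ht'p : α t' ≠ α p := fun hh => htp (ht'.symm.trans hh)
    have h1 : (t' : ℕ) ≠ (p : ℕ) := fun hh => ht'p (congrArg α (Fin.ext hh))
    have h2 : (t' : ℕ) ≠ (r : ℕ) := fun hh =>
      ht'p ((congrArg α (Fin.ext hh)).trans hblock.symm)
    constructor
    · refine Fin.lt_def.2 ?_
      by_contra hle
      push_neg at hle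
      have ht'lt : (t' : ℕ) < (p : ℕ) := by omega
      exact cross α hnc t' t p r ht' hblock ht'p
        (Fin.lt_def.2 ht'lt) hpt (Fin.lt_def.2 htr)
    · by_contra hle
      push_neg at hle
      have hrt' : (r : ℕ) < (t' : ℕ) := by omega
      exact cross α hnc p r t t' hblock ht'.symm (Ne.symm htp)
        hpt (Fin.lt_def.2 htr) (Fin.lt_def.2 hrt')
  have hDiff : ∀ j, Dm α p ((r : ℕ)) j ↔ ∃ i, e i = j := by
    intro j
    rw [← henum j]
    constructor
    · rintro ⟨h1, h2, h3, h4⟩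
      refine ⟨h1, h2, Fin.lt_def.2 h3, ?_⟩
      rintro ⟨u, s, a1, a2, a3, a4, a5, a6, a7⟩
      exact h4 ⟨u, s, a1, a2, a3, a4, a5, a6, Fin.lt_def.1 a7⟩
    · rintro ⟨h1, h2, h3, h4⟩
      refine ⟨h1, h2, Fin.lt_def.1 h3, ?_⟩
      rintro ⟨u, s, a1, a2, a3, a4, a5, a6, a7⟩
      exact h4 ⟨u, s, a1, a2, a3, a4, a5, a6, Fin.lt_def.2 a7⟩
  have htail : (((List.ofFn f).take ((p : ℕ) + 1)).prod) T = α p := by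
    rw [take_succ_prod f (p : ℕ) p.isLt, Equiv.Perm.mul_apply]
    have h0 : f ⟨(p : ℕ), p.isLt⟩ T = α p := Equiv.swap_apply_right _ _
    rw [h0, take_eval f 0 (p : ℕ) (Nat.zero_le _) (by omega) (α p) ?_]
    · simp
    · intro t ht _ htp2
      refine Equiv.swap_apply_of_ne_of_ne ?_ (hα p)
      intro hh
      rcases hexact ⟨t, ht⟩ hh.symm with h' | h' <;>
        (have := congrArg Fin.val h'; simp at this; omega)
  have hPp : (List.ofFn f).prod (α p) = (((List.ofFn f).take ((r : ℕ))).prod) T := by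
    rw [hprm, take_eval f ((r : ℕ) + 1) m (by omega) le_rfl (α p) ?_]
    · rw [take_succ_prod f (r : ℕ) r.isLt, Equiv.Perm.mul_apply]
      congr 1
      show Equiv.swap (α ⟨(r : ℕ), r.isLt⟩) T (α p) = T
      rw [show α p = α r from hblock]
      exact Equiv.swap_apply_left _ _
    · intro t ht h1 _
      refine Equiv.swap_apply_of_ne_of_ne ?_ (hα p)
      intro hh
      rcases hexact ⟨t, ht⟩ hh.symm with h' | h' <;>
        (have := congrArg Fin.val h'; simp at this; omega)
  have hred : ∀ s : Fin m, (∀ t, α t = α s → t = s) →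
      (List.ofFn f).prod (α s) = (((List.ofFn f).take ((s : ℕ))).prod) T := by
    intro s hs
    rw [hprm, take_eval f ((s : ℕ) + 1) m (by omega) le_rfl (α s) ?_]
    · rw [take_succ_prod f (s : ℕ) s.isLt, Equiv.Perm.mul_apply]
      congr 1
      exact Equiv.swap_apply_left _ _
    · intro t ht h1 _
      refine Equiv.swap_apply_of_ne_of_ne ?_ (hα s)
      intro hh
      have := congrArg Fin.val (hs ⟨t, ht⟩ hh.symm)
      simp at this
      omega
  obtain ⟨des1, des2⟩ := descent α T hα hnc hsize ((r : ℕ)) (le_of_lt r.isLt) p hpr' hcl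
  refine ⟨?_, ?_, ?_, ?_⟩
  · intro hk
    subst hk
    have hno : ¬ ∃ j, Dm α p ((r : ℕ)) j := by
      rintro ⟨j, hj⟩
      obtain ⟨i, -⟩ := (hDiff j).1 hj
      exact i.elim0
    rw [hPp, des1 hno]
    exact htail
  · intro hk
    have hD : Dm α p ((r : ℕ)) (e ⟨k - 1, Nat.sub_lt hk Nat.one_pos⟩) :=
      (hDiff _).2 ⟨_, rfl⟩
    have hmax : ∀ j', Dm α p ((r : ℕ)) j' → j' ≤ e ⟨k - 1, Nat.sub_lt hk Nat.one_pos⟩ := by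
      intro j' hj'
      obtain ⟨i, rfl⟩ := (hDiff j').1 hj'
      exact he.monotone (Fin.le_def.2 (by have := i.isLt; simp; omega))
    rw [hPp]
    exact des2 _ hD hmax
  · intro j hj0
    have hDj : Dm α p ((r : ℕ)) (e j) := (hDiff _).2 ⟨j, rfl⟩
    have hcl2 : ClosedIv α p (((e j) : ℕ)) := closed_sub α p (e j) _ hcl hDj
    obtain ⟨d1, d2⟩ := descent α T hα hnc hsize (((e j)) : ℕ) (le_of_lt (e j).isLt) p
      (Fin.lt_def.1 hDj.2.1) hcl2
    have hno : ¬ ∃ j'', Dm α p (((e j)) : ℕ) j'' := by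
      rintro ⟨j'', hj''⟩
      have h2 := Dm_lift α p (e j) j'' _ hDj hj''
      obtain ⟨i, rfl⟩ := (hDiff j'').1 h2
      have hij : i < j := he.lt_iff_lt.1 (Fin.lt_def.2 hj''.2.2.1)
      have := Fin.lt_def.1 hij
      omega
    rw [hred (e j) hDj.1, d1 hno]
    exact htail
  · intro j j' hjj'
    have hDj : Dm α p ((r : ℕ)) (e j) := (hDiff _).2 ⟨j, rfl⟩
    have hDj' : Dm α p ((r : ℕ)) (e j') := (hDiff _).2 ⟨j', rfl⟩
    have hcl2 : ClosedIv α p (((e j)) : ℕ) := closed_sub α p (e j) _ hcl hDj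
    obtain ⟨d1, d2⟩ := descent α T hα hnc hsize (((e j)) : ℕ) (le_of_lt (e j).isLt) p
      (Fin.lt_def.1 hDj.2.1) hcl2
    have hlt : e j' < e j := he (Fin.lt_def.2 (by omega))
    have hmem : Dm α p (((e j)) : ℕ) (e j') := by
      refine ⟨hDj'.1, hDj'.2.1, Fin.lt_def.1 hlt, ?_⟩
      rintro ⟨u, s, a1, a2, a3, a4, a5, a6, a7⟩
      have hejr : ((e j : Fin m) : ℕ) < (r : ℕ) := hDj.2.2.1
      exact hDj'.2.2.2 ⟨u, s, a1, a2, a3, a4, a5, a6, by omega⟩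
    have hmax : ∀ j'', Dm α p (((e j)) : ℕ) j'' → j'' ≤ e j' := by
      intro j'' hj''
      have h2 := Dm_lift α p (e j) j'' _ hDj hj''
      obtain ⟨i, rfl⟩ := (hDiff _).1 h2
      have hij : i < j := he.lt_iff_lt.1 (Fin.lt_def.2 hj''.2.2.1)
      refine he.monotone (Fin.le_def.2 ?_)
      have := Fin.lt_def.1 hij
      omega
    rw [hred (e j) hDj.1]
    exact d2 _ hmem hmax


end JM
end

section
/- Let π ∈ NC_{1,2}(m) and consider products of Jucys-Murphy transpositions a_1⋯a_m with equality partition π. If {p,r} is a two-element block of π, then none of the elements α_p, α_{p+1}, ..., α_r appears in any of the transpositions a_1,...,a_{p-1}, a_{r+1},...,a_m. -/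
namespace JM

theorem Noncrossing.eq_of_interleaved {m : ℕ} {β : Type*} {α : Fin m → β}
    (hnc : Noncrossing (eqPartition α)) {a b c d : Fin m} (hab : a < b) (hbc : b < c)
    (hcd : c < d) (hac : α a = α c) (hbd : α b = α d) : α a = α b := by
  by_contra hne
  refine hnc {i | α i = α a} ⟨a, rfl⟩ {i | α i = α b} ⟨b, rfl⟩ (fun h => hne ?_)
    ⟨a, b, c, d, hab, hbc, hcd, rfl, hac.symm, rfl, hbd.symm⟩
  exact (Set.ext_iff.mp h a).mp rfl

theorem separation_general (n m : ℕ) (α : Fin m → Fin (2*n+1))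
    (hnc : Noncrossing (eqPartition α))
    (p r : Fin m) (hpr : p < r) (hblock : α p = α r)
    (hexact : ∀ j, α j = α p → j = p ∨ j = r) :
    ∀ i s : Fin m, (i < p ∨ r < i) → p ≤ s → s ≤ r → α i ≠ α s := by
  intro i s hi hps hsr his
  have hip : α i ≠ α p := fun h => by rcases hexact i h with rfl | rfl <;> omega
  have hp_s : p < s := hps.lt_of_ne fun h => hip (h ▸ his)
  have hs_r : s < r := hsr.lt_of_ne fun h => hip (his.trans (h ▸ hblock.symm))
  rcases hi with hi | hi
  · exact hip (hnc.eq_of_interleaved hi hp_s hs_r his hblock)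
  · exact hip (his.trans (hnc.eq_of_interleaved hp_s hs_r hi hblock his.symm).symm)

/-- for a two-element block {p,r} of a non-crossing partition with blocks of
size one or two, no α-value occurring between p and r occurs outside [p,r]. -/
theorem separation (n m : ℕ) (α : Fin m → Fin (2*n+1))
    (hα : ∀ i, α i ≠ jmTop n)
    (hnc : Noncrossing (eqPartition α))
    (hsize : ∀ B ∈ eqPartition α, B.ncard = 1 ∨ B.ncard = 2)
    (p r : Fin m) (hpr : p < r) (hblock : α p = α r)
    (hexact : ∀ j, α j = α p → j = p ∨ j = r) :
    ∀ i s : Fin m, (i < p ∨ r < i) → p ≤ s → s ≤ r → α i ≠ α s :=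
  separation_general n m α hnc p r hpr hblock hexact

end JM
end

section
/- Let G = S_{2n+1} and H = S_n × S_n × {e} ≤ G (permutations preserving {1,...,n}, {n+1,...,2n} and fixing 2n+1). Suppose (a_1,...,a_m) and (a'_1,...,a'_m) are two tuples of transpositions of the form (α,2n+1), both compatible with the same coloring pattern (α_i and α'_i lie in the same half {1,...,n} or {n+1,...,2n} for each i) and inducing the same equality partition π (a_i = a_j iff a'_i = a'_j iff i,j are in the same block of π). Then the products a_1⋯a_m and a'_1⋯a'_m are conjugate by an element of H. -/
/-!
The assignment `α i ↦ α' i` is a well-defined injective partial map because the two tuples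
have the same equality partition, and it respects the three orbits `{1,…,n}`, `{n+1,…,2n}`,
`{2n+1}` of `S_n × S_n × {e}`. Extending it one point at a time by transpositions inside an
orbit gives `γ ∈ S_n × S_n × {e}`; since `γ` fixes `2n+1`, conjugation by `γ` sends
`(α i, 2n+1)` to `(α' i, 2n+1)`, hence one product to the other.
-/
namespace JM

section PermExtension

variable {β γ : Type*} [DecidableEq β]

theorem comp_swap_of_apply_eq (p : β → γ) {u v : β} (h : p u = p v) :
    p ∘ Equiv.swap u v = p := by
  rw [Equiv.comp_swap_eq_update, h, Function.update_eq_self, ← h, Function.update_eq_self]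

theorem exists_perm_comp_eq_of_eq_iff_eq (p : β → γ) :
    ∀ {m : ℕ} (a a' : Fin m → β), (∀ i j, a i = a j ↔ a' i = a' j) → p ∘ a = p ∘ a' →
      ∃ σ : Equiv.Perm β, σ ∘ a = a' ∧ p ∘ σ = p
  | 0, _, _, _, _ => ⟨1, funext fun i => i.elim0, rfl⟩
  | m + 1, a, a', hpat, hp => by
    obtain ⟨σ, hσ, hσp⟩ := exists_perm_comp_eq_of_eq_iff_eq p (a ∘ Fin.castSucc)
      (a' ∘ Fin.castSucc) (fun i j => hpat _ _) (by rw [← Function.comp_assoc, hp]; rfl)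
    have hσ' (k : Fin m) : σ (a k.castSucc) = a' k.castSucc := congrFun hσ k
    by_cases hseen : ∃ j : Fin m, a j.castSucc = a (Fin.last m)
    · obtain ⟨j, hj⟩ := hseen
      refine ⟨σ, funext fun i => ?_, hσp⟩
      induction i using Fin.lastCases with
      | last => rw [Function.comp_apply, ← hj, hσ', (hpat _ _).mp hj]
      | cast k => exact hσ' k
    · push Not at hseen
      set u := σ (a (Fin.last m))
      set v := a' (Fin.last m)
      have hpuv : p u = p v := (congrFun hσp _).trans (congrFun hp _)
      refine ⟨Equiv.swap u v * σ, funext fun i => ?_, ?_⟩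
      · induction i using Fin.lastCases with
        | last => simp [u, v]
        | cast k =>
          have hku : a' k.castSucc ≠ u := hσ' k ▸ fun h => hseen k (σ.injective h)
          have hkv : a' k.castSucc ≠ v := fun h => hseen k ((hpat _ _).mpr h)
          simp only [Function.comp_apply, Equiv.Perm.mul_apply, hσ']
          exact Equiv.swap_apply_of_ne_of_ne hku hkv
      · rw [Equiv.Perm.coe_mul, ← Function.comp_assoc, comp_swap_of_apply_eq p hpuv, hσp]

theorem conj_prod_ofFn_swap {m : ℕ} (σ : Equiv.Perm β) (a : Fin m → β) (t : β) :
    σ * (List.ofFn fun i => Equiv.swap (a i) t).prod * σ⁻¹ =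
      (List.ofFn fun i => Equiv.swap (σ (a i)) (σ t)).prod := by
  rw [← MulAut.conj_apply, map_list_prod, List.map_ofFn]
  simp only [Function.comp_def, MulAut.conj_apply, Equiv.swap_apply_apply]

end PermExtension

/-- The three orbits of `S_n × S_n × {e}` on `Fin (2n+1)`. -/
def block (n : ℕ) (x : Fin (2*n+1)) : Fin 3 :=
  if (x : ℕ) < n then 0 else if (x : ℕ) < 2*n then 1 else 2

theorem block_eq_zero_iff {n : ℕ} {x : Fin (2*n+1)} : block n x = 0 ↔ (x : ℕ) < n := by
  unfold block
  split_ifs <;> simp_all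

theorem block_eq_one_iff {n : ℕ} {x : Fin (2*n+1)} :
    block n x = 1 ↔ n ≤ (x : ℕ) ∧ (x : ℕ) < 2*n := by
  unfold block
  split_ifs <;> simp_all

theorem block_eq_two_iff {n : ℕ} {x : Fin (2*n+1)} : block n x = 2 ↔ x = jmTop n := by
  have := x.isLt
  simp only [block, jmTop, Fin.ext_iff, Fin.val_last]
  split_ifs <;> simp <;> omega

theorem block_eq_of_lt_iff_lt {n : ℕ} {x y : Fin (2*n+1)} (hx : x ≠ jmTop n) (hy : y ≠ jmTop n)
    (h : (x : ℕ) < n ↔ (y : ℕ) < n) : block n x = block n y := by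
  replace hx := mt block_eq_two_iff.mp hx
  replace hy := mt block_eq_two_iff.mp hy
  unfold block at *
  split_ifs at * <;> simp_all

theorem inH_of_block_comp_eq {n : ℕ} {σ : Equiv.Perm (Fin (2*n+1))}
    (hσ : block n ∘ σ = block n) : InH n σ := by
  have h (x) : block n (σ x) = block n x := congrFun hσ x
  exact ⟨fun x hx => block_eq_zero_iff.mp ((h x).trans (block_eq_zero_iff.mpr hx)),
    fun x hx hx' => block_eq_one_iff.mp ((h x).trans (block_eq_one_iff.mpr ⟨hx, hx'⟩)),
    block_eq_two_iff.mp ((h _).trans (block_eq_two_iff.mpr rfl))⟩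

/-- two tuples with the same coloring pattern and the same equality
partition have products conjugate by an element of S_n × S_n × {e}. -/
theorem conjugate_tuples (n m : ℕ) (α α' : Fin m → Fin (2*n+1))
    (hα : ∀ i, α i ≠ jmTop n) (hα' : ∀ i, α' i ≠ jmTop n)
    (hhalf : ∀ i, (α i : ℕ) < n ↔ (α' i : ℕ) < n)
    (hpat : ∀ i j, α i = α j ↔ α' i = α' j) :
    ∃ γ : Equiv.Perm (Fin (2*n+1)), InH n γ ∧
      (List.ofFn (jmTuple α')).prod = γ * (List.ofFn (jmTuple α)).prod * γ⁻¹ := by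
  obtain ⟨γ, hγα, hγ⟩ := exists_perm_comp_eq_of_eq_iff_eq (block n) α α' hpat
    (funext fun i => block_eq_of_lt_iff_lt (hα i) (hα' i) (hhalf i))
  have hγH := inH_of_block_comp_eq hγ
  refine ⟨γ, hγH, ?_⟩
  subst hγα
  unfold jmTuple
  rw [conj_prod_ofFn_swap, hγH.2.2]
  rfl

end JM
end

section
/- For a non-crossing partition π of {1,...,m} with all blocks of size 1 or 2, and a two-coloring p of {1,...,m}: the merged partition F(π) (obtained by merging each two-element block with its direct inner singleton blocks) respects the coloring p if and only if π respects p and every singleton block of π that is a direct inner block of a two-element block B has the same color as B. -/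
namespace JM

/-!
A block of `F(π)` is a two-element block `B` together with its direct inner singletons. Since
`B` is nonempty, such a union is monochromatic exactly when `B` is and every added singleton has
the colour of `B`; and the singleton blocks of `π` are monochromatic anyway, so `Respects π c`
only constrains the two-element blocks.
-/

def mergedBlock {m : ℕ} (π : Set (Set (Fin m))) (B : Set (Fin m)) : Set (Fin m) :=
  B ∪ {x | ∃ S ∈ π, S = {x} ∧ DirectInner π S B}

lemma respects_Fmap_iff {m : ℕ} (π : Set (Set (Fin m))) (c : Fin m → Bool) :
    Respects (Fmap π) c ↔ ∀ B ∈ π, B.ncard = 2 →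
      ∀ i ∈ mergedBlock π B, ∀ j ∈ mergedBlock π B, c i = c j := by
  constructor
  · exact fun h B hB hB2 => h _ ⟨B, hB, hB2, rfl⟩
  · rintro h C ⟨B, hB, hB2, rfl⟩
    exact h B hB hB2

lemma respects_iff_of_ncard_eq_one_or_two {m : ℕ} {π : Set (Set (Fin m))}
    (hπ : ∀ B ∈ π, B.ncard = 1 ∨ B.ncard = 2) (c : Fin m → Bool) :
    Respects π c ↔ ∀ B ∈ π, B.ncard = 2 → ∀ i ∈ B, ∀ j ∈ B, c i = c j := by
  refine ⟨fun h B hB _ => h B hB, fun h B hB => ?_⟩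
  rcases hπ B hB with hB1 | hB2
  · obtain ⟨x, rfl⟩ := Set.ncard_eq_one.mp hB1
    rintro i rfl j rfl
    rfl
  · exact h B hB hB2

lemma forall_mem_union_eq_iff {α β : Type*} (f : α → β) {s t : Set α} (hs : s.Nonempty) :
    (∀ i ∈ s ∪ t, ∀ j ∈ s ∪ t, f i = f j) ↔
      (∀ i ∈ s, ∀ j ∈ s, f i = f j) ∧ ∀ i ∈ t, ∀ j ∈ s, f i = f j := by
  obtain ⟨b, hb⟩ := hs
  refine ⟨fun h => ⟨fun i hi j hj => h i (.inl hi) j (.inl hj),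
    fun i hi j hj => h i (.inr hi) j (.inl hj)⟩, fun ⟨hss, hts⟩ => ?_⟩
  have eq_at_b : ∀ x ∈ s ∪ t, f x = f b := by
    rintro x (hx | hx)
    · exact hss x hx b hb
    · exact hts x hx b hb
  intro i hi j hj
  rw [eq_at_b i hi, eq_at_b j hj]

lemma forall_directInner_singleton_iff {m : ℕ} (π : Set (Set (Fin m))) (B : Set (Fin m))
    (P : Fin m → Prop) :
    (∀ x ∈ {x | ∃ S ∈ π, S = {x} ∧ DirectInner π S B}, P x) ↔
      ∀ S ∈ π, S.ncard = 1 → DirectInner π S B → ∀ i ∈ S, P i := by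
  constructor
  · intro h S hS hS1 hSB i hi
    obtain ⟨x, rfl⟩ := Set.ncard_eq_one.mp hS1
    rw [Set.mem_singleton_iff.mp hi]
    exact h x ⟨{x}, hS, rfl, hSB⟩
  · rintro h x ⟨S, hS, rfl, hSB⟩
    exact h {x} hS (Set.ncard_singleton x) hSB x rfl

lemma forall_mem_mergedBlock_eq_iff {m : ℕ} (π : Set (Set (Fin m))) {B : Set (Fin m)}
    (hB : B.Nonempty) (c : Fin m → Bool) :
    (∀ i ∈ mergedBlock π B, ∀ j ∈ mergedBlock π B, c i = c j) ↔
      (∀ i ∈ B, ∀ j ∈ B, c i = c j) ∧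
        ∀ S ∈ π, S.ncard = 1 → DirectInner π S B → ∀ i ∈ S, ∀ j ∈ B, c i = c j := by
  rw [mergedBlock, forall_mem_union_eq_iff c hB, forall_directInner_singleton_iff π B]

/-- F(π) respects a two-coloring iff π respects it and every direct inner
singleton of a two-element block has the same color as that block. -/
theorem F_respects_iff (m : ℕ) (π : Set (Set (Fin m))) (hπ : π ∈ NC1lt2 m)
    (c : Fin m → Bool) :
    Respects (Fmap π) c ↔
      (Respects π c ∧ ∀ S ∈ π, ∀ B ∈ π, S.ncard = 1 → B.ncard = 2 →
        DirectInner π S B → ∀ i ∈ S, ∀ j ∈ B, c i = c j) := by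
  have merged_iff (B : Set (Fin m)) (hB2 : B.ncard = 2) := forall_mem_mergedBlock_eq_iff π
    (Set.nonempty_of_ncard_ne_zero (by omega : B.ncard ≠ 0)) c
  rw [respects_Fmap_iff, respects_iff_of_ncard_eq_one_or_two hπ.2.2.1]
  constructor
  · intro h
    exact ⟨fun B hB hB2 => ((merged_iff B hB2).mp (h B hB hB2)).1,
      fun S hS B hB hS1 hB2 => ((merged_iff B hB2).mp (h B hB hB2)).2 S hS hS1⟩
  · rintro ⟨hpairs, hsingles⟩ B hB hB2
    exact (merged_iff B hB2).mpr
      ⟨hpairs B hB hB2, fun S hS hS1 => hsingles S hS B hB hS1 hB2⟩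

end JM
end
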